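/- arXiv:1701.08703 — 2 statements merged into one kernel-verified Lean document; each statement's English description precedes it below -/
import Mathlib

section
/- Let (S, V) be a complete semiring-semimodule pair and let M ∈ (S^{n×n})^{p*×p*} be a restricted one-counter (roc) matrix with counter symbol p. Then for all 0 ≤ k ≤ n, the vector (M^{ω,k})_p ∈ V^n is a solution of the linear equation z = (M_{p,p²} + M_{p,p²}(M*)_{p,ε} + M_{p,p}) z over V^n. -/
/-!
Common definitions: complete semirings with infinite sums, complete
semiring-semimodule pairs with infinite products, restricted one-counter
(roc) matrices, their star and omega blocks, power series over finite and
infinite words, weighted ω-restricted one-counter automata, and the mixed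
context-free grammars obtained by the triple-pair construction.
-/

/-- The data of a semiring together with sums over arbitrary index sets. -/
structure CSOps (S : Type) where
  add : S → S → S
  mul : S → S → S
  zero : S
  one : S
  iSum : ∀ {ι : Type}, (ι → S) → S

namespace CSOps

variable {S : Type}

/-- Powers `a^m`. -/
def pow (R : CSOps S) (a : S) : ℕ → S
  | 0 => R.one
  | m + 1 => R.mul a (R.pow a m)

/-- The star operation of a complete starsemiring: `a* = Σ_{m≥0} a^m`. -/
def star (R : CSOps S) (a : S) : S := R.iSum fun m : ℕ => R.pow a m

/-- Finite sums of lists of elements. -/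
def listSum (R : CSOps S) (l : List S) : S := l.foldr R.add R.zero

/-- Finite (ordered) products of lists of elements. -/
def listProd (R : CSOps S) (l : List S) : S := l.foldr R.mul R.one

/-- The ordered product `s_a · s_{a+1} ⋯ s_{b-1}`. -/
def rangeProd (R : CSOps S) (s : ℕ → S) (a b : ℕ) : S :=
  R.listProd ((List.range' a (b - a)).map s)

/-- `R` is a complete semiring: the operations form a semiring, the infinite
sums extend the finite ones, are associative and commutative (compatible with
arbitrary partitions of the index set) and satisfy both distributive laws. -/
structure IsComplete (R : CSOps S) : Prop where
  add_assoc : ∀ a b c, R.add (R.add a b) c = R.add a (R.add b c)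
  add_comm : ∀ a b, R.add a b = R.add b a
  zero_add : ∀ a, R.add R.zero a = a
  mul_assoc : ∀ a b c, R.mul (R.mul a b) c = R.mul a (R.mul b c)
  one_mul : ∀ a, R.mul R.one a = a
  mul_one : ∀ a, R.mul a R.one = a
  zero_mul : ∀ a, R.mul R.zero a = R.zero
  mul_zero : ∀ a, R.mul a R.zero = R.zero
  left_distrib : ∀ a b c, R.mul a (R.add b c) = R.add (R.mul a b) (R.mul a c)
  right_distrib : ∀ a b c, R.mul (R.add a b) c = R.add (R.mul a c) (R.mul b c)
  iSum_empty : ∀ {ι : Type} (f : ι → S), IsEmpty ι → R.iSum f = R.zero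
  iSum_single : ∀ {ι : Type} (f : ι → S) (i₀ : ι), (∀ i, i = i₀) → R.iSum f = f i₀
  iSum_pair : ∀ {ι : Type} (f : ι → S) (i₀ i₁ : ι), i₀ ≠ i₁ → (∀ i, i = i₀ ∨ i = i₁) →
      R.iSum f = R.add (f i₀) (f i₁)
  iSum_partition : ∀ {ι κ : Type} (g : ι → κ) (f : ι → S),
      R.iSum (fun j : κ => R.iSum (fun i : {i : ι // g i = j} => f i.1)) = R.iSum f
  mul_iSum : ∀ {ι : Type} (c : S) (f : ι → S), R.mul c (R.iSum f) = R.iSum fun i => R.mul c (f i)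
  iSum_mul : ∀ {ι : Type} (c : S) (f : ι → S), R.mul (R.iSum f) c = R.iSum fun i => R.mul (f i) c

/-- `R` is a continuous starsemiring: it is complete and every infinite sum is
the least upper bound, with respect to the natural order `a ≤ b ↔ ∃ c, a + c = b`,
of the sums over the finite subfamilies. -/
structure IsContinuous (R : CSOps S) : Prop where
  complete : R.IsComplete
  finsumLe : ∀ {ι : Type} (f : ι → S) (l : List ι), l.Nodup →
      ∃ c, R.add (R.listSum (l.map f)) c = R.iSum f
  iSumLeast : ∀ {ι : Type} (f : ι → S) (b : S),
      (∀ l : List ι, l.Nodup → ∃ c, R.add (R.listSum (l.map f)) c = b) →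
      ∃ c, R.add (R.iSum f) c = b

end CSOps

/-- The data of a left `S`-semimodule `V` with sums over arbitrary index sets and
an infinite product operation mapping infinite sequences over `S` to `V`. -/
structure CPOps (S V : Type) where
  vadd : V → V → V
  vzero : V
  smul : S → V → V
  vSum : ∀ {ι : Type}, (ι → V) → V
  iProd : (ℕ → S) → V

namespace CPOps

variable {S V : Type}

/-- `(S, V)` (with operations `R`, `P`) is a complete semiring-semimodule pair. -/
structure IsComplete (R : CSOps S) (P : CPOps S V) : Prop where
  vadd_assoc : ∀ u v w, P.vadd (P.vadd u v) w = P.vadd u (P.vadd v w)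
  vadd_comm : ∀ u v, P.vadd u v = P.vadd v u
  vzero_vadd : ∀ v, P.vadd P.vzero v = v
  mul_smul : ∀ a b v, P.smul (R.mul a b) v = P.smul a (P.smul b v)
  one_smul : ∀ v, P.smul R.one v = v
  add_smul : ∀ a b v, P.smul (R.add a b) v = P.vadd (P.smul a v) (P.smul b v)
  smul_vadd : ∀ a u v, P.smul a (P.vadd u v) = P.vadd (P.smul a u) (P.smul a v)
  zero_smul : ∀ v, P.smul R.zero v = P.vzero
  smul_vzero : ∀ a, P.smul a P.vzero = P.vzero
  vSum_empty : ∀ {ι : Type} (f : ι → V), IsEmpty ι → P.vSum f = P.vzero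
  vSum_single : ∀ {ι : Type} (f : ι → V) (i₀ : ι), (∀ i, i = i₀) → P.vSum f = f i₀
  vSum_pair : ∀ {ι : Type} (f : ι → V) (i₀ i₁ : ι), i₀ ≠ i₁ → (∀ i, i = i₀ ∨ i = i₁) →
      P.vSum f = P.vadd (f i₀) (f i₁)
  vSum_partition : ∀ {ι κ : Type} (g : ι → κ) (f : ι → V),
      P.vSum (fun j : κ => P.vSum (fun i : {i : ι // g i = j} => f i.1)) = P.vSum f
  smul_vSum : ∀ {ι : Type} (a : S) (f : ι → V),
      P.smul a (P.vSum f) = P.vSum fun i => P.smul a (f i)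
  iSum_smul : ∀ {ι : Type} (f : ι → S) (v : V),
      P.smul (R.iSum f) v = P.vSum fun i => P.smul (f i) v
  iProd_regroup : ∀ (s : ℕ → S) (e : ℕ → ℕ), e 0 = 0 → Monotone e →
      P.iProd s = P.iProd fun i => R.rangeProd s (e i) (e (i + 1))
  smul_iProd_shift : ∀ s : ℕ → S, P.smul (s 0) (P.iProd fun i => s (i + 1)) = P.iProd s
  iProd_iSum : ∀ (I : ℕ → Type) (s : ∀ j, I j → S),
      P.iProd (fun j => R.iSum (s j)) = P.vSum fun f : (∀ j, I j) => P.iProd fun j => s j (f j)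

end CPOps

/-! ### Matrices of blocks indexed by the counter contents `p^i ↔ i` -/

/-- An `n × n` block of weights. -/
abbrev Blk (n : ℕ) (S : Type) := Fin n → Fin n → S

def bZero {S : Type} (R : CSOps S) {n : ℕ} : Blk n S := fun _ _ => R.zero

def bOne {S : Type} (R : CSOps S) {n : ℕ} : Blk n S :=
  fun i j => if i = j then R.one else R.zero

def bAdd {S : Type} (R : CSOps S) {n : ℕ} (X Y : Blk n S) : Blk n S :=
  fun i j => R.add (X i j) (Y i j)

def bMul {S : Type} (R : CSOps S) {n : ℕ} (X Y : Blk n S) : Blk n S :=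
  fun i j => R.iSum fun l : Fin n => R.mul (X i l) (Y l j)

def bPow {S : Type} (R : CSOps S) {n : ℕ} (X : Blk n S) : ℕ → Blk n S
  | 0 => bOne R
  | m + 1 => bMul R X (bPow R X m)

/-- A matrix in `(S^{n×n})^{p* × p*}`: rows and columns are indexed by the words
`p^i` (identified with `i : ℕ`) and the entries are `n × n` blocks over `S`. -/
abbrev IMat (n : ℕ) (S : Type) := ℕ → ℕ → Blk n S

def iMatMul {S : Type} (R : CSOps S) {n : ℕ} (M N : IMat n S) : IMat n S :=
  fun i j => fun a b => R.iSum fun l : ℕ => bMul R (M i l) (N l j) a b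

def iMatOne {S : Type} (R : CSOps S) {n : ℕ} : IMat n S :=
  fun i j => if i = j then bOne R else bZero R

def iMatPow {S : Type} (R : CSOps S) {n : ℕ} (M : IMat n S) : ℕ → IMat n S
  | 0 => iMatOne R
  | m + 1 => iMatMul R M (iMatPow R M m)

/-- `iStar R M i j` is the block `(M*)_{p^i, p^j} = Σ_{m≥0} (M^m)_{p^i, p^j}`. -/
def iStar {S : Type} (R : CSOps S) {n : ℕ} (M : IMat n S) : IMat n S :=
  fun i j => fun a b => R.iSum fun m : ℕ => iMatPow R M m i j a b

/-- `M` is a restricted one-counter (roc) matrix (with counter symbol `p`):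
there are blocks `A = M_{p,p²}`, `C = M_{p,p}`, `B = M_{p,ε}` with
`M_{p^k,p^{k+1}} = A`, `M_{p^k,p^k} = C`, `M_{p^k,p^{k-1}} = B` for all `k ≥ 1`,
and all other blocks are `0`. -/
def IsRoc {S : Type} (R : CSOps S) {n : ℕ} (M : IMat n S) : Prop :=
  (∀ k : ℕ, 1 ≤ k → M k (k + 1) = M 1 2 ∧ M k k = M 1 1 ∧ M k (k - 1) = M 1 0) ∧
  (∀ i j : ℕ, (i = 0 ∨ (j ≠ i + 1 ∧ j ≠ i ∧ j + 1 ≠ i)) → M i j = bZero R)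

/-! ### Vectors over the semimodule -/

def vecAdd {S V : Type} (P : CPOps S V) {n : ℕ} (u v : Fin n → V) : Fin n → V :=
  fun a => P.vadd (u a) (v a)

/-- A block acting on a vector of semimodule elements: `(X z)_a = Σ_l X_{a l} z_l`. -/
def matVec {S V : Type} (P : CPOps S V) {n : ℕ} (X : Blk n S) (v : Fin n → V) : Fin n → V :=
  fun a => P.vSum fun l : Fin n => P.smul (X a l) (v l)

/-- A row vector acting on a column vector of semimodule elements: `I z = Σ_m I_m z_m`. -/
def rowAct {S V : Type} (P : CPOps S V) {n : ℕ} (Iv : Fin n → S) (v : Fin n → V) : V :=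
  P.vSum fun m : Fin n => P.smul (Iv m) (v m)

/-- The scalar `I · X · P = Σ_{m₁,m₂} I_{m₁} X_{m₁ m₂} P_{m₂}`. -/
def tripleProd {S : Type} (R : CSOps S) {n : ℕ} (Iv : Fin n → S) (X : Blk n S)
    (Pv : Fin n → S) : S :=
  R.iSum fun q : Fin n × Fin n => R.mul (Iv q.1) (R.mul (X q.1 q.2) (Pv q.2))

/-- The sequence of weights along an infinite path starting in row block `p^i`,
state `j`, and then visiting the blocks `p^{hs 0}, p^{hs 1}, …` in states
`js 0, js 1, …`. -/
def pathEntry {S : Type} {n : ℕ} (M : IMat n S) (i : ℕ) (j : Fin n)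
    (hs : ℕ → ℕ) (js : ℕ → Fin n) : ℕ → S
  | 0 => M i (hs 0) j (js 0)
  | t + 1 => M (hs t) (hs (t + 1)) (js t) (js (t + 1))

/-- The block `(M^ω)_{p^i}` of the column vector `M^ω ∈ (V^n)^{p*}`:
`((M^ω)_{p^i})_j` is the sum over all infinite sequences of pushdown contents and
states of the infinite products of the corresponding entries of `M`. -/
def mOmega {S V : Type} (P : CPOps S V) {n : ℕ} (M : IMat n S) (i : ℕ) : Fin n → V :=
  fun j => P.vSum fun q : (ℕ → ℕ) × (ℕ → Fin n) => P.iProd (pathEntry M i j q.1 q.2)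

/-- `P_k`: the sequences of states (states `1,…,n` being represented by `Fin n`,
state `j+1` by `j : Fin n`) that are `≤ k` (i.e. have representative `< k`)
infinitely often — the Büchi condition with repeated states `{1, …, k}`. -/
def InPk (n k : ℕ) (js : ℕ → Fin n) : Prop := ∀ N : ℕ, ∃ t, N ≤ t ∧ (js t : ℕ) < k

/-- The block `(M^{ω,k})_{p^i}` of the column vector `M^{ω,k} ∈ (V^n)^{p*}`:
the sum over all infinite sequences `i₁, i₂, … ≥ 1` of pushdown contents and all
state sequences in `P_k` of the infinite products of the corresponding entries. -/
def mOmegaK {S V : Type} (P : CPOps S V) {n : ℕ} (M : IMat n S) (k : ℕ) (i : ℕ) :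
    Fin n → V :=
  fun j => P.vSum fun q : {q : (ℕ → ℕ) × (ℕ → Fin n) // (∀ t, 1 ≤ q.1 t) ∧ InPk n k q.2} =>
    P.iProd (pathEntry M i j q.1.1 q.1.2)

/-! ### The algebraic systems -/

/-- The right-hand side `A x x + C x + B` of the algebraic system
`x = M_{p,p²} x x + M_{p,p} x + M_{p,ε}`. -/
def quadRhs {S : Type} (R : CSOps S) {n : ℕ} (Ablk Cblk Bblk X : Blk n S) : Blk n S :=
  bAdd R (bAdd R (bMul R Ablk (bMul R X X)) (bMul R Cblk X)) Bblk

/-- `X` is a solution of `x = A x x + C x + B`. -/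
def IsQuadSol {S : Type} (R : CSOps S) {n : ℕ} (Ablk Cblk Bblk X : Blk n S) : Prop :=
  X = quadRhs R Ablk Cblk Bblk X

/-- The matrix `M_{p,p²} + M_{p,p²}(M*)_{p,ε} + M_{p,p}`. -/
def linMat {S : Type} (R : CSOps S) {n : ℕ} (M : IMat n S) : Blk n S :=
  bAdd R (bAdd R (M 1 2) (bMul R (M 1 2) (iStar R M 1 0))) (M 1 1)

/-- `z` is a solution of the linear equation
`z = (M_{p,p²} + M_{p,p²}(M*)_{p,ε} + M_{p,p}) z` over `V^n`. -/
def IsLinSol {S V : Type} (R : CSOps S) (P : CPOps S V) {n : ℕ} (M : IMat n S)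
    (z : Fin n → V) : Prop :=
  z = matVec P (linMat R M) z

/-- The right-hand side `A z + (A x) z + C z` of the linear system
`z = M_{p,p²} z + M_{p,p²} x z + M_{p,p} z`. -/
def zRhs {S V : Type} (R : CSOps S) (P : CPOps S V) {n : ℕ} (Ablk Cblk x : Blk n S)
    (z : Fin n → V) : Fin n → V :=
  vecAdd P (vecAdd P (matVec P Ablk z) (matVec P (bMul R Ablk x) z)) (matVec P Cblk z)

/-- The behavior `‖C‖ = (I (M*)_{p,ε} P, I (M^{ω,k})_p)` of an
`ω`-restricted one-counter automaton. -/
def rocBehavior {S V : Type} (R : CSOps S) (P : CPOps S V) {n : ℕ} (M : IMat n S)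
    (Iv Pv : Fin n → S) (k : ℕ) : S × V :=
  (tripleProd R Iv (iStar R M 1 0) Pv, rowAct P Iv (mOmegaK P M k 1))

/-! ### Power series over finite and infinite words -/

open Classical in
/-- The complete semiring `S⟪Σ*⟫` of power series over finite words,
with the Cauchy product. -/
noncomputable def finOps {S : Type} (R : CSOps S) (A : Type) : CSOps (List A → S) where
  add s t := fun w => R.add (s w) (t w)
  mul s t := fun w =>
    R.iSum fun u : {u : List A × List A // u.1 ++ u.2 = w} => R.mul (s u.1.1) (t u.1.2)
  zero := fun _ => R.zero
  one := fun w => if w = [] then R.one else R.zero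
  iSum f := fun w => R.iSum fun i => f i w

/-- Concatenation of a finite word with an ω-word. -/
def wcat {A : Type} (u : List A) (v : ℕ → A) : ℕ → A :=
  fun t => if h : t < u.length then u.get ⟨t, h⟩ else v (t - u.length)

/-- Lengths of the partial concatenations of a sequence of finite words. -/
def flen {A : Type} (f : ℕ → List A) : ℕ → ℕ
  | 0 => 0
  | m + 1 => flen f m + (f m).length

/-- `f 0, f 1, f 2, …` is a factorization of the ω-word `w` into finite words:
the concatenation `f 0 · f 1 · ⋯` equals `w`. -/
def IsFact {A : Type} (f : ℕ → List A) (w : ℕ → A) : Prop :=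
  (∀ N : ℕ, ∃ m, N ≤ flen f m) ∧
  (∀ (m i : ℕ) (h : i < (f m).length), (f m).get ⟨i, h⟩ = w (flen f m + i))

/-- The complete semimodule pair operations on `(S⟪Σ*⟫, S⟪Σ^ω⟫)`, for a complete
star-omega semiring `S` given by `R` (sums) and `P0` (the infinite product of
the complete semiring-semimodule pair `(S, S)`). -/
def omOps {S : Type} (R : CSOps S) (P0 : CPOps S S) (A : Type) :
    CPOps (List A → S) ((ℕ → A) → S) where
  vadd s t := fun w => R.add (s w) (t w)
  vzero := fun _ => R.zero
  smul s t := fun w =>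
    R.iSum fun u : {u : List A × (ℕ → A) // wcat u.1 u.2 = w} => R.mul (s u.1.1) (t u.1.2)
  vSum f := fun w => R.iSum fun i => f i w
  iProd s := fun w =>
    R.iSum fun f : {f : ℕ → List A // IsFact f w} => P0.iProd fun j => s j (f.1 j)

/-- A series is a polynomial supported on `Σ ∪ {ε}`, i.e. an element of
`S⟨Σ ∪ {ε}⟩`: its coefficients vanish on words of length `≥ 2`. -/
def PolySupp {S : Type} (R : CSOps S) {A : Type} (s : List A → S) : Prop :=
  ∀ w : List A, 2 ≤ w.length → s w = R.zero

/-! ### The mixed context-free grammar of the triple-pair construction -/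

/-- Variables for finite derivations: `x₀` and the triples `[i, p, j]`. -/
inductive XVar (n : ℕ) where
  | x0 : XVar n
  | tr : Fin n → Fin n → XVar n

/-- Variables for infinite derivations: `z₀` and the pairs `[i, p]`. -/
inductive ZVar (n : ℕ) where
  | z0 : ZVar n
  | pr : Fin n → ZVar n

/-- Sentential forms over the variables for finite derivations and terminals. -/
abbrev SForm (n : ℕ) (A : Type) := List (XVar n ⊕ A)

/-- The productions `P_X` for finite derivations of the grammar `G_k`
constructed from a roc automaton with matrix blocks `M`, initial vector `Iv`
and final vector `Pv` (here `a, b` range over `Σ ∪ {ε}`, represented by words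
of length at most one). -/
inductive XProd {K : Type} (R : CSOps K) {n : ℕ} {A : Type} (M : IMat n (List A → K))
    (Iv Pv : Fin n → List A → K) : XVar n → SForm n A → Prop where
  | start (a b : List A) (m₁ m₂ : Fin n) : a.length ≤ 1 → b.length ≤ 1 →
      R.mul (Iv m₁ a) (Pv m₂ b) ≠ R.zero →
      XProd R M Iv Pv XVar.x0 (a.map Sum.inr ++ Sum.inl (XVar.tr m₁ m₂) :: b.map Sum.inr)
  | push (a : List A) (i j m₁ m₂ : Fin n) : a.length ≤ 1 → M 1 2 i m₁ a ≠ R.zero →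
      XProd R M Iv Pv (XVar.tr i j)
        (a.map Sum.inr ++ [Sum.inl (XVar.tr m₁ m₂), Sum.inl (XVar.tr m₂ j)])
  | stay (a : List A) (i j m : Fin n) : a.length ≤ 1 → M 1 1 i m a ≠ R.zero →
      XProd R M Iv Pv (XVar.tr i j) (a.map Sum.inr ++ [Sum.inl (XVar.tr m j)])
  | pop (a : List A) (i j : Fin n) : a.length ≤ 1 → M 1 0 i j a ≠ R.zero →
      XProd R M Iv Pv (XVar.tr i j) (a.map Sum.inr)

/-- The productions `P_Z` for infinite derivations: `ZProd R M Iv W α m` states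
that `W → α [m, p]` is a production, where `α` is the part of the right-hand
side over `X ∪ Σ` and `[m, p]` is the trailing variable for infinite derivations. -/
inductive ZProd {K : Type} (R : CSOps K) {n : ℕ} {A : Type} (M : IMat n (List A → K))
    (Iv : Fin n → List A → K) : ZVar n → SForm n A → Fin n → Prop where
  | init (a : List A) (m : Fin n) : a.length ≤ 1 → Iv m a ≠ R.zero →
      ZProd R M Iv ZVar.z0 (a.map Sum.inr) m
  | push (a : List A) (i m : Fin n) : a.length ≤ 1 → M 1 2 i m a ≠ R.zero →
      ZProd R M Iv (ZVar.pr i) (a.map Sum.inr) m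
  | pushTr (a : List A) (i m₁ m₂ : Fin n) : a.length ≤ 1 → M 1 2 i m₁ a ≠ R.zero →
      ZProd R M Iv (ZVar.pr i) (a.map Sum.inr ++ [Sum.inl (XVar.tr m₁ m₂)]) m₂
  | stay (a : List A) (i m : Fin n) : a.length ≤ 1 → M 1 1 i m a ≠ R.zero →
      ZProd R M Iv (ZVar.pr i) (a.map Sum.inr) m

/-- One leftmost derivation step: the leftmost variable is rewritten. -/
inductive LMStep {n : ℕ} {A : Type} (Px : XVar n → SForm n A → Prop) :
    SForm n A → SForm n A → Prop where
  | mk (u : List A) (X : XVar n) (β rest : SForm n A) : Px X β →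
      LMStep Px (u.map Sum.inr ++ Sum.inl X :: rest) (u.map Sum.inr ++ (β ++ rest))

/-- The finite-word part of the language of the grammar:
`{w ∈ Σ* | x₀ ⇒_L^* w}`. -/
def FinLang {K : Type} (R : CSOps K) {n : ℕ} {A : Type} (M : IMat n (List A → K))
    (Iv Pv : Fin n → List A → K) : Set (List A) :=
  {w | Relation.ReflTransGen (LMStep (XProd R M Iv Pv)) [Sum.inl XVar.x0] (w.map Sum.inr)}

/-- The set of finite leftmost derivations of the word `w` from `x₀`: lists of
sentential forms beginning with `x₀`, ending with `w`, each step being a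
leftmost rewriting by a production of `P_X`. -/
def finDerivSet {K : Type} (R : CSOps K) {n : ℕ} {A : Type} (M : IMat n (List A → K))
    (Iv Pv : Fin n → List A → K) (w : List A) : Set (List (SForm n A)) :=
  {l | l.Chain' (LMStep (XProd R M Iv Pv)) ∧ l.head? = some [Sum.inl XVar.x0] ∧
       l.getLast? = some (w.map Sum.inr)}

/-- The leftmost variable of a sentential form (the one rewritten in a leftmost
derivation step). -/
def leftVar {n : ℕ} {A : Type} (α : SForm n A) : Option (XVar n) :=
  (α.filterMap Sum.getLeft?).head?

/-- An infinite (leftmost) derivation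
`z₀ ⇒_L α₀[i₀,p] ⇒_L^* w₀[i₀,p] ⇒_L w₀α₁[i₁,p] ⇒_L^* w₀w₁[i₁,p] ⇒_L ⋯`:
the data of the states `i₀, i₁, …`, the sentential forms `α₀, α₁, …`, the
produced finite words `w₀, w₁, …` and the finite leftmost derivations
`α_m ⇒_L^* w_m`. -/
structure InfDeriv {K : Type} (R : CSOps K) {n : ℕ} {A : Type} (M : IMat n (List A → K))
    (Iv Pv : Fin n → List A → K) where
  iseq : ℕ → Fin n
  alph : ℕ → SForm n A
  wseq : ℕ → List A
  fder : ℕ → List (SForm n A)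
  hz0 : ZProd R M Iv ZVar.z0 (alph 0) (iseq 0)
  hz : ∀ m, ZProd R M Iv (ZVar.pr (iseq m)) (alph (m + 1)) (iseq (m + 1))
  hchain : ∀ m, (fder m).Chain' (LMStep (XProd R M Iv Pv))
  hhead : ∀ m, (fder m).head? = some (alph m)
  hlast : ∀ m, (fder m).getLast? = some ((wseq m).map Sum.inr)

/-- The infinite derivation produces the ω-word `w = w₀ w₁ w₂ ⋯`. -/
def InfDeriv.Produces {K : Type} {R : CSOps K} {n : ℕ} {A : Type}
    {M : IMat n (List A → K)} {Iv Pv : Fin n → List A → K}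
    (d : InfDeriv R M Iv Pv) (w : ℕ → A) : Prop :=
  IsFact d.wseq w

/-- The Büchi condition of an `(ω,k)`-derivation: the sequence of first
components of the variables rewritten (`i₀, i₁^1, …, i₁^{t₁}, i₁, i₂^1, …`)
lies in `P_k`, i.e. hits `{1, …, k}` (represented by `Fin`-values `< k`)
infinitely often. -/
def InfDeriv.Buchi {K : Type} {R : CSOps K} {n : ℕ} {A : Type}
    {M : IMat n (List A → K)} {Iv Pv : Fin n → List A → K}
    (d : InfDeriv R M Iv Pv) (k : ℕ) : Prop :=
  ∀ N : ℕ, ∃ m, N ≤ m ∧ ((d.iseq m : ℕ) < k ∨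
    ∃ α ∈ (d.fder m).dropLast, ∃ i j : Fin n,
      leftVar α = some (XVar.tr i j) ∧ (i : ℕ) < k)

/-- The infinite-word part of the language of the grammar `G_k`:
`{w ∈ Σ^ω | z₀ ⇒_L^{ω,k} w}`. -/
def InfLang {K : Type} (R : CSOps K) {n : ℕ} {A : Type} (M : IMat n (List A → K))
    (Iv Pv : Fin n → List A → K) (k : ℕ) : Set (ℕ → A) :=
  {w | ∃ d : InfDeriv R M Iv Pv, d.Produces w ∧ d.Buchi k}

/-! ### Computations of an ω-restricted one-counter automaton -/

/-- One computation step between instantaneous descriptions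
`(state, remaining input, counter)`. -/
def CompStep {K : Type} (R : CSOps K) {n : ℕ} {A : Type} (M : IMat n (List A → K)) :
    (Fin n × List A × ℕ) → (Fin n × List A × ℕ) → Prop := fun c c' =>
  ∃ a : List A, a.length ≤ 1 ∧ c.2.1 = a ++ c'.2.1 ∧ 1 ≤ c.2.2 ∧
    ((c'.2.2 = c.2.2 + 1 ∧ M 1 2 c.1 c'.1 a ≠ R.zero) ∨
     (c'.2.2 = c.2.2 ∧ M 1 1 c.1 c'.1 a ≠ R.zero) ∨
     (c'.2.2 + 1 = c.2.2 ∧ M 1 0 c.1 c'.1 a ≠ R.zero))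

/-- The set of finite computations on input `w`: from an initial instantaneous
description `(i, w, p)` with `I_i ≠ 0` to an accepting instantaneous
description `(j, ε, ε)` with `P_j ≠ 0`. -/
def finCompSet {K : Type} (R : CSOps K) {n : ℕ} {A : Type} (M : IMat n (List A → K))
    (Iv Pv : Fin n → List A → K) (w : List A) : Set (List (Fin n × List A × ℕ)) :=
  {l | l.Chain' (CompStep R M) ∧
       (∃ i : Fin n, Iv i ≠ (fun _ => R.zero) ∧ l.head? = some (i, w, 1)) ∧
       (∃ j : Fin n, Pv j ≠ (fun _ => R.zero) ∧ l.getLast? = some (j, [], 0))}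

/-- An infinite computation of the automaton starting in an initial
instantaneous description `(i, ·, p)` with `I_i ≠ 0`: the sequences of states,
counter values and read letters (`rd m ∈ Σ ∪ {ε}`). -/
structure InfComp {K : Type} (R : CSOps K) {n : ℕ} {A : Type} (M : IMat n (List A → K))
    (Iv : Fin n → List A → K) where
  st : ℕ → Fin n
  ct : ℕ → ℕ
  rd : ℕ → List A
  hI : Iv (st 0) ≠ fun _ => R.zero
  hct0 : ct 0 = 1
  hlen : ∀ m, (rd m).length ≤ 1
  hpos : ∀ m, 1 ≤ ct m
  hstep : ∀ m,
    (ct (m + 1) = ct m + 1 ∧ M 1 2 (st m) (st (m + 1)) (rd m) ≠ R.zero) ∨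
    (ct (m + 1) = ct m ∧ M 1 1 (st m) (st (m + 1)) (rd m) ≠ R.zero) ∨
    (ct (m + 1) + 1 = ct m ∧ M 1 0 (st m) (st (m + 1)) (rd m) ≠ R.zero)

/-- The infinite computation reads exactly the ω-word `w`. -/
def InfComp.Reads {K : Type} {R : CSOps K} {n : ℕ} {A : Type}
    {M : IMat n (List A → K)} {Iv : Fin n → List A → K}
    (d : InfComp R M Iv) (w : ℕ → A) : Prop :=
  IsFact d.rd w

/-- The infinite computation visits the repeated states `{1, …, k}` infinitely
often. -/
def InfComp.Buchi {K : Type} {R : CSOps K} {n : ℕ} {A : Type}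
    {M : IMat n (List A → K)} {Iv : Fin n → List A → K}
    (d : InfComp R M Iv) (k : ℕ) : Prop :=
  ∀ N : ℕ, ∃ m, N ≤ m ∧ (d.st m : ℕ) < k

/-! ### The complete star-omega semirings `𝔹` and `ℕ^∞` -/

open Classical in
/-- The complete semiring `𝔹 = ({0,1}, ∨, ∧, *, 0, 1)`. -/
noncomputable def boolCS : CSOps Bool where
  add a b := a || b
  mul a b := a && b
  zero := false
  one := true
  iSum f := decide (∃ i, f i = true)

open Classical in
/-- The complete semiring-semimodule pair `(𝔹, 𝔹)`, with the infinite product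
making `𝔹` a complete star-omega semiring. -/
noncomputable def boolCP : CPOps Bool Bool where
  vadd a b := a || b
  vzero := false
  smul a b := a && b
  vSum f := decide (∃ i, f i = true)
  iProd s := decide (∀ i, s i = true)

/-- The complete semiring `ℕ^∞ = (ℕ ∪ {∞}, +, ·, *, 0, 1)`: infinite sums are
the suprema of the finite partial sums. -/
noncomputable def enatCS : CSOps ℕ∞ where
  add a b := a + b
  mul a b := a * b
  zero := 0
  one := 1
  iSum {ι} f := ⨆ F : Finset ι, ∑ i ∈ F, f i

open Classical in
/-- The complete semiring-semimodule pair `(ℕ^∞, ℕ^∞)`, with the infinite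
product making `ℕ^∞` a complete star-omega semiring. -/
noncomputable def enatCP : CPOps ℕ∞ ℕ∞ where
  vadd a b := a + b
  vzero := 0
  smul a b := a * b
  vSum {ι} f := ⨆ F : Finset ι, ∑ i ∈ F, f i
  iProd s := if ∃ i, s i = 0 then 0 else ⨆ m : ℕ, ∏ i ∈ Finset.range m, s i


namespace Stmt7

variable {S V : Type} {R : CSOps S} {P : CPOps S V}

/-! ### Toolkit for `R`-sums -/

lemma rSum_congr (R : CSOps S) {ι : Type} {f g : ι → S} (h : ∀ i, f i = g i) :
    R.iSum f = R.iSum g := by rw [funext h]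

lemma r_add_zero (hR : R.IsComplete) (a : S) : R.add a R.zero = a := by
  rw [hR.add_comm]; exact hR.zero_add a

lemma rSum_zero (hR : R.IsComplete) (ι : Type) :
    R.iSum (fun _ : ι => R.zero) = R.zero := by
  have h := hR.mul_iSum (ι := ι) R.zero (fun _ => R.zero)
  simp only [hR.zero_mul] at h
  exact h.symm

lemma rSum_eq_zero (hR : R.IsComplete) {ι : Type} {f : ι → S} (h : ∀ i, f i = R.zero) :
    R.iSum f = R.zero := by rw [rSum_congr R h]; exact rSum_zero hR ι

lemma rSum_reindex (hR : R.IsComplete) {ι κ : Type} (e : ι ≃ κ) (f : κ → S) :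
    R.iSum (fun i => f (e i)) = R.iSum f := by
  have h := hR.iSum_partition (g := e) (f := fun i => f (e i))
  have h2 : ∀ j : κ, R.iSum (fun i : {i : ι // e i = j} => f (e i.1)) = f j := by
    intro j
    rw [hR.iSum_single _ ⟨e.symm j, e.apply_symm_apply j⟩
      (fun i => Subtype.ext (e.injective (by rw [i.2, e.apply_symm_apply])))]
    simp
  rw [← h]
  exact rSum_congr R h2

lemma rSum_subtype_iff (hR : R.IsComplete) {ι : Type} {p q : ι → Prop} (h : ∀ i, p i ↔ q i)
    (f : ι → S) :
    R.iSum (fun i : {i // p i} => f i.1) = R.iSum (fun i : {i // q i} => f i.1) :=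
  rSum_reindex hR (Equiv.subtypeEquivRight h) (fun i : {i // q i} => f i.1)

lemma rSum_split (hR : R.IsComplete) {ι : Type} (p : ι → Prop) (f : ι → S) :
    R.iSum f = R.add (R.iSum fun i : {i // p i} => f i.1)
      (R.iSum fun i : {i // ¬ p i} => f i.1) := by
  classical
  have h := hR.iSum_partition (g := fun i => decide (p i)) (f := f)
  rw [← h, hR.iSum_pair _ true false (by simp) (fun b => by cases b <;> simp)]
  congr 1
  · exact rSum_subtype_iff hR (fun i => by simp) f
  · exact rSum_subtype_iff hR (fun i => by simp) f

lemma rSum_eq_single (hR : R.IsComplete) {ι : Type} (f : ι → S) (i₀ : ι)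
    (h : ∀ i, i ≠ i₀ → f i = R.zero) : R.iSum f = f i₀ := by
  have h1 : R.iSum (fun i : {i // i = i₀} => f i.1) = f i₀ :=
    hR.iSum_single (fun i : {i // i = i₀} => f i.1) ⟨i₀, rfl⟩ (fun i => Subtype.ext i.2)
  have h2 : R.iSum (fun i : {i // ¬ i = i₀} => f i.1) = R.zero :=
    rSum_eq_zero hR (fun i => h i.1 i.2)
  refine (rSum_split hR (fun i => i = i₀) f).trans ?_
  rw [h1, h2, r_add_zero hR]

lemma rSum_drop_one (hR : R.IsComplete) (f : ℕ → S) (h0 : f 0 = R.zero) :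
    R.iSum f = R.iSum (fun m => f (m + 1)) := by
  have h1 : R.iSum (fun i : {i : ℕ // i = 0} => f i.1) = R.zero :=
    (hR.iSum_single (fun i : {i : ℕ // i = 0} => f i.1) ⟨0, rfl⟩
      (fun i => Subtype.ext i.2)).trans h0
  have h2 : R.iSum (fun i : {i : ℕ // ¬ i = 0} => f i.1) = R.iSum (fun m => f (m + 1)) := by
    exact (rSum_reindex hR
      (⟨fun m => ⟨m + 1, by omega⟩, fun x => x.1 - 1, fun m => by simp,
        fun x => Subtype.ext (show x.1 - 1 + 1 = x.1 by have := x.2; omega)⟩ :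
        ℕ ≃ {i : ℕ // ¬ i = 0}) (fun i => f i.1)).symm
  refine (rSum_split hR (fun i => i = 0) f).trans ?_
  rw [h1, h2, hR.zero_add]

/-! ### Toolkit for `P`-sums -/

lemma vSum_congr (P : CPOps S V) {ι : Type} {f g : ι → V} (h : ∀ i, f i = g i) :
    P.vSum f = P.vSum g := by rw [funext h]

lemma v_add_zero (hP : P.IsComplete R) (v : V) : P.vadd v P.vzero = v := by
  rw [hP.vadd_comm]; exact hP.vzero_vadd v

lemma vSum_zero (hP : P.IsComplete R) (ι : Type) :
    P.vSum (fun _ : ι => P.vzero) = P.vzero := by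
  have h := hP.smul_vSum (ι := ι) R.zero (fun _ => P.vzero)
  simp only [hP.zero_smul] at h
  exact h.symm

lemma vSum_eq_zero (hP : P.IsComplete R) {ι : Type} {f : ι → V} (h : ∀ i, f i = P.vzero) :
    P.vSum f = P.vzero := by rw [vSum_congr P h]; exact vSum_zero hP ι

lemma vSum_reindex (hP : P.IsComplete R) {ι κ : Type} (e : ι ≃ κ) (f : κ → V) :
    P.vSum (fun i => f (e i)) = P.vSum f := by
  have h := hP.vSum_partition (g := e) (f := fun i => f (e i))
  have h2 : ∀ j : κ, P.vSum (fun i : {i : ι // e i = j} => f (e i.1)) = f j := by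
    intro j
    rw [hP.vSum_single _ ⟨e.symm j, e.apply_symm_apply j⟩
      (fun i => Subtype.ext (e.injective (by rw [i.2, e.apply_symm_apply])))]
    simp
  rw [← h]
  exact vSum_congr P h2

lemma vSum_subtype_iff (hP : P.IsComplete R) {ι : Type} {p q : ι → Prop} (h : ∀ i, p i ↔ q i)
    (f : ι → V) :
    P.vSum (fun i : {i // p i} => f i.1) = P.vSum (fun i : {i // q i} => f i.1) :=
  vSum_reindex hP (Equiv.subtypeEquivRight h) (fun i : {i // q i} => f i.1)

lemma vSum_split (hP : P.IsComplete R) {ι : Type} (p : ι → Prop) (f : ι → V) :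
    P.vSum f = P.vadd (P.vSum fun i : {i // p i} => f i.1)
      (P.vSum fun i : {i // ¬ p i} => f i.1) := by
  classical
  have h := hP.vSum_partition (g := fun i => decide (p i)) (f := f)
  rw [← h, hP.vSum_pair _ true false (by simp) (fun b => by cases b <;> simp)]
  congr 1
  · exact vSum_subtype_iff hP (fun i => by simp) f
  · exact vSum_subtype_iff hP (fun i => by simp) f

lemma vSum_eq_single (hP : P.IsComplete R) {ι : Type} (f : ι → V) (i₀ : ι)
    (h : ∀ i, i ≠ i₀ → f i = P.vzero) : P.vSum f = f i₀ := by
  have h1 : P.vSum (fun i : {i // i = i₀} => f i.1) = f i₀ :=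
    hP.vSum_single (fun i : {i // i = i₀} => f i.1) ⟨i₀, rfl⟩ (fun i => Subtype.ext i.2)
  have h2 : P.vSum (fun i : {i // ¬ i = i₀} => f i.1) = P.vzero :=
    vSum_eq_zero hP (fun i => h i.1 i.2)
  refine (vSum_split hP (fun i => i = i₀) f).trans ?_
  rw [h1, h2, v_add_zero hP]

lemma vSum_eq_pair (hP : P.IsComplete R) {ι : Type} (f : ι → V) (i₀ i₁ : ι) (hne : i₀ ≠ i₁)
    (h : ∀ i, i ≠ i₀ → i ≠ i₁ → f i = P.vzero) :
    P.vSum f = P.vadd (f i₀) (f i₁) := by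
  have h1 : P.vSum (fun i : {i // i = i₀ ∨ i = i₁} => f i.1) = P.vadd (f i₀) (f i₁) :=
    hP.vSum_pair (fun i : {i // i = i₀ ∨ i = i₁} => f i.1) ⟨i₀, Or.inl rfl⟩ ⟨i₁, Or.inr rfl⟩
      (fun hEq => hne (congrArg Subtype.val hEq))
      (fun x => x.2.elim (fun hx => Or.inl (Subtype.ext hx)) (fun hx => Or.inr (Subtype.ext hx)))
  have h2 : P.vSum (fun i : {i // ¬ (i = i₀ ∨ i = i₁)} => f i.1) = P.vzero :=
    vSum_eq_zero hP (fun i => h i.1 (fun hx => i.2 (Or.inl hx)) (fun hx => i.2 (Or.inr hx)))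
  refine (vSum_split hP (fun i => i = i₀ ∨ i = i₁) f).trans ?_
  rw [h1, h2, v_add_zero hP]

lemma vSum_drop_two (hP : P.IsComplete R) (f : ℕ → V) (h0 : f 0 = P.vzero)
    (h1 : f 1 = P.vzero) : P.vSum f = P.vSum (fun μ => f (μ + 2)) := by
  have hz : P.vSum (fun i : {i : ℕ // i ≤ 1} => f i.1) = P.vzero := by
    refine vSum_eq_zero hP (fun i => ?_)
    have : i.1 = 0 ∨ i.1 = 1 := by omega
    rcases this with h | h <;> rw [h]
    · exact h0
    · exact h1
  have h2 : P.vSum (fun i : {i : ℕ // ¬ i ≤ 1} => f i.1) = P.vSum (fun μ => f (μ + 2)) := by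
    exact (vSum_reindex hP
      (⟨fun m => ⟨m + 2, by omega⟩, fun x => x.1 - 2, fun m => by simp,
        fun x => Subtype.ext (show x.1 - 2 + 2 = x.1 by have := x.2; omega)⟩ :
        ℕ ≃ {i : ℕ // ¬ i ≤ 1}) (fun i => f i.1)).symm
  refine (vSum_split hP (fun i => i ≤ 1) f).trans ?_
  rw [hz, h2, hP.vzero_vadd]

lemma vSum_prod_left (hP : P.IsComplete R) {ι κ : Type} (f : ι → κ → V) :
    P.vSum (fun x : ι × κ => f x.1 x.2) = P.vSum (fun i => P.vSum (fun j => f i j)) := by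
  have h := hP.vSum_partition (g := fun x : ι × κ => x.1) (f := fun x : ι × κ => f x.1 x.2)
  rw [← h]
  refine vSum_congr P (fun i => ?_)
  exact (vSum_reindex hP
    (⟨fun j => ⟨(i, j), rfl⟩, fun x => x.1.2,
      fun j => rfl, fun x => by rcases x with ⟨⟨i', j⟩, hx⟩; cases hx; rfl⟩ :
      κ ≃ {x : ι × κ // x.1 = i}) (fun x : {x : ι × κ // x.1 = i} => f x.1.1 x.1.2)).symm

lemma vSum_prod_right (hP : P.IsComplete R) {ι κ : Type} (f : ι → κ → V) :
    P.vSum (fun x : ι × κ => f x.1 x.2) = P.vSum (fun j => P.vSum (fun i => f i j)) := by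
  have h := hP.vSum_partition (g := fun x : ι × κ => x.2) (f := fun x : ι × κ => f x.1 x.2)
  rw [← h]
  refine vSum_congr P (fun j => ?_)
  exact (vSum_reindex hP
    (⟨fun i => ⟨(i, j), rfl⟩, fun x => x.1.1,
      fun i => rfl, fun x => by rcases x with ⟨⟨i, j'⟩, hx⟩; cases hx; rfl⟩ :
      ι ≃ {x : ι × κ // x.2 = j}) (fun x : {x : ι × κ // x.2 = j} => f x.1.1 x.1.2)).symm

lemma vSum_comm (hP : P.IsComplete R) {ι κ : Type} (f : ι → κ → V) :
    P.vSum (fun i => P.vSum (fun j => f i j)) = P.vSum (fun j => P.vSum (fun i => f i j)) := by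
  rw [← vSum_prod_left hP f, vSum_prod_right hP f]

lemma vSum_vadd (hP : P.IsComplete R) {ι : Type} (f g : ι → V) :
    P.vSum (fun i => P.vadd (f i) (g i)) = P.vadd (P.vSum f) (P.vSum g) := by
  have hpair : ∀ u v : V, P.vSum (fun b : Bool => cond b u v) = P.vadd u v := by
    intro u v
    rw [hP.vSum_pair _ true false (by simp) (fun b => by cases b <;> simp)]; rfl
  calc P.vSum (fun i => P.vadd (f i) (g i))
      = P.vSum (fun i => P.vSum (fun b : Bool => cond b (f i) (g i))) :=
        vSum_congr P (fun i => (hpair (f i) (g i)).symm)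
    _ = P.vSum (fun b : Bool => P.vSum (fun i => cond b (f i) (g i))) :=
        vSum_comm hP _
    _ = P.vadd (P.vSum f) (P.vSum g) := by
        rw [hP.vSum_pair _ true false (by simp) (fun b => by cases b <;> simp)]; rfl


/-! ### Paths, cons/tail, and the peeling lemma -/

variable {n : ℕ}

abbrev Qt (n k : ℕ) := {q : (ℕ → ℕ) × (ℕ → Fin n) // (∀ t, 1 ≤ q.1 t) ∧ InPk n k q.2}

def consF {α : Type} (a : α) (f : ℕ → α) : ℕ → α := fun t => Nat.casesOn t a f

def consR (l : ℕ) (c : Fin n) (rq : (ℕ → ℕ) × (ℕ → Fin n)) : (ℕ → ℕ) × (ℕ → Fin n) :=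
  (consF l rq.1, consF c rq.2)

def tailR (rq : (ℕ → ℕ) × (ℕ → Fin n)) : (ℕ → ℕ) × (ℕ → Fin n) :=
  (fun t => rq.1 (t + 1), fun t => rq.2 (t + 1))

lemma consR_tailR (rq : (ℕ → ℕ) × (ℕ → Fin n)) :
    consR (rq.1 0) (rq.2 0) (tailR rq) = rq := by
  apply Prod.ext <;> funext t <;> cases t <;> rfl

lemma InPk_tail {k : ℕ} {js : ℕ → Fin n} (h : InPk n k js) :
    InPk n k (fun t => js (t + 1)) := by
  intro N
  obtain ⟨t, ht, hlt⟩ := h (N + 1)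
  refine ⟨t - 1, by omega, ?_⟩
  show (js (t - 1 + 1) : ℕ) < k
  have ht1 : t - 1 + 1 = t := by omega
  rw [ht1]; exact hlt

lemma InPk_cons {k : ℕ} (c : Fin n) {js : ℕ → Fin n} (h : InPk n k js) :
    InPk n k (consF c js) := by
  intro N
  obtain ⟨t, ht, hlt⟩ := h N
  exact ⟨t + 1, by omega, hlt⟩

def tailQ {k : ℕ} (q : Qt n k) : Qt n k :=
  ⟨tailR q.1, ⟨fun t => q.2.1 (t + 1), InPk_tail q.2.2⟩⟩

def consQ {k : ℕ} (l : ℕ) (hl : 1 ≤ l) (c : Fin n) (q : Qt n k) : Qt n k :=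
  ⟨consR l c q.1,
    ⟨by intro t; cases t with
      | zero => exact hl
      | succ t' => exact q.2.1 t', InPk_cons c q.2.2⟩⟩

lemma pathEntry_tail {M : IMat n S} (i : ℕ) (a : Fin n) (hs : ℕ → ℕ) (js : ℕ → Fin n) :
    (fun t => pathEntry M i a hs js (t + 1))
      = pathEntry M (hs 0) (js 0) (fun t => hs (t + 1)) (fun t => js (t + 1)) := by
  funext t; cases t <;> rfl

lemma iProd_peel (hP : P.IsComplete R) (M : IMat n S) (i : ℕ) (a : Fin n)
    (hs : ℕ → ℕ) (js : ℕ → Fin n) :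
    P.iProd (pathEntry M i a hs js)
      = P.smul (M i (hs 0) a (js 0))
          (P.iProd (pathEntry M (hs 0) (js 0) (fun t => hs (t + 1)) (fun t => js (t + 1)))) := by
  rw [← hP.smul_iProd_shift (pathEntry M i a hs js), pathEntry_tail]
  rfl

/-! ### Facts about roc matrices -/

lemma M_row0 {M : IMat n S} (hM : IsRoc R M) (j : ℕ) : M 0 j = bZero R :=
  hM.2 0 j (Or.inl rfl)

lemma M_one_ge3 {M : IMat n S} (hM : IsRoc R M) {j : ℕ} (h : 3 ≤ j) : M 1 j = bZero R :=
  hM.2 1 j (Or.inr ⟨by omega, by omega, by omega⟩)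

lemma shiftM {M : IMat n S} (hM : IsRoc R M) (x y : ℕ) : M (x + 2) (y + 1) = M (x + 1) y := by
  obtain ⟨h1, h0⟩ := hM
  by_cases h2 : y = x + 2
  · subst h2
    have ha : M (x + 2) (x + 3) = M 1 2 := (h1 (x + 2) (by omega)).1
    have hb : M (x + 1) (x + 2) = M 1 2 := (h1 (x + 1) (by omega)).1
    rw [show x + 2 + 1 = x + 3 by omega, ha, hb]
  by_cases h3 : y = x + 1
  · subst h3
    have ha : M (x + 2) (x + 2) = M 1 1 := (h1 (x + 2) (by omega)).2.1
    have hb : M (x + 1) (x + 1) = M 1 1 := (h1 (x + 1) (by omega)).2.1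
    rw [show x + 1 + 1 = x + 2 by omega, ha, hb]
  by_cases h4 : y = x
  · rw [h4]
    have ha : M (x + 2) (x + 2 - 1) = M 1 0 := (h1 (x + 2) (by omega)).2.2
    have hb : M (x + 1) (x + 1 - 1) = M 1 0 := (h1 (x + 1) (by omega)).2.2
    rw [show x + 2 - 1 = x + 1 by omega] at ha
    rw [show x + 1 - 1 = x by omega] at hb
    rw [ha, hb]
  · rw [h0 (x + 2) (y + 1) (Or.inr ⟨by omega, by omega, by omega⟩),
      h0 (x + 1) y (Or.inr ⟨by omega, by omega, by omega⟩)]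

/-! ### The vector `H` and its peeling -/

def Hv (P : CPOps S V) (M : IMat n S) (k i : ℕ) (a : Fin n) : V :=
  P.vSum (fun q : Qt n k => P.iProd (pathEntry M i a q.1.1 q.1.2))

lemma Hv_subtype (hP : P.IsComplete R) (M : IMat n S) {k : ℕ} (p : Qt n k → Prop)
    (hp : ∀ q, p q) (i : ℕ) (a : Fin n) :
    P.vSum (fun q : {q : Qt n k // p q} => P.iProd (pathEntry M i a q.1.1.1 q.1.1.2))
      = Hv P M k i a :=
  vSum_reindex hP (Equiv.subtypeUnivEquiv hp)
    (fun q : Qt n k => P.iProd (pathEntry M i a q.1.1 q.1.2))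

lemma peel_aux {k : ℕ} (Φ : ((ℕ → ℕ) × (ℕ → Fin n)) → Prop) (l : ℕ) (c : Fin n)
    (x : {x : {q : Qt n k // Φ q.1} // (x.1.1.1 0, x.1.1.2 0) = (l, c)}) :
    1 ≤ l ∧ Φ (consR l c (tailQ x.1.1).1) := by
  obtain ⟨⟨⟨rq, hq⟩, hΦ⟩, hx⟩ := x
  have h : rq.1 0 = l := congrArg Prod.fst hx
  have h' : rq.2 0 = c := congrArg Prod.snd hx
  subst h; subst h'
  refine ⟨hq.1 0, ?_⟩
  show Φ (consR (rq.1 0) (rq.2 0) (tailR rq))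
  rw [consR_tailR]
  exact hΦ

def peelEquiv {k : ℕ} (Φ : ((ℕ → ℕ) × (ℕ → Fin n)) → Prop) (l : ℕ) (c : Fin n) :
    {q : Qt n k // 1 ≤ l ∧ Φ (consR l c q.1)}
      ≃ {x : {q : Qt n k // Φ q.1} // (x.1.1.1 0, x.1.1.2 0) = (l, c)} :=
  ⟨fun q => ⟨⟨consQ l q.2.1 c q.1, q.2.2⟩, rfl⟩,
   fun x => ⟨tailQ x.1.1, peel_aux Φ l c x⟩,
   fun q => rfl,
   by
    rintro ⟨⟨⟨rq, hq⟩, hΦ⟩, hx⟩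
    have h : rq.1 0 = l := congrArg Prod.fst hx
    have h' : rq.2 0 = c := congrArg Prod.snd hx
    subst h; subst h'
    apply Subtype.ext
    apply Subtype.ext
    apply Subtype.ext
    show consR (rq.1 0) (rq.2 0) (tailR rq) = rq
    exact consR_tailR rq⟩

lemma peel (hP : P.IsComplete R) (M : IMat n S) {k : ℕ}
    (Φ : ((ℕ → ℕ) × (ℕ → Fin n)) → Prop) (i : ℕ) (a : Fin n) :
    P.vSum (fun q : {q : Qt n k // Φ q.1} => P.iProd (pathEntry M i a q.1.1.1 q.1.1.2))
      = P.vSum (fun l : ℕ => P.vSum (fun c : Fin n =>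
          P.smul (M i l a c)
            (P.vSum (fun q : {q : Qt n k // 1 ≤ l ∧ Φ (consR l c q.1)} =>
              P.iProd (pathEntry M l c q.1.1.1 q.1.1.2))))) := by
  have hpart := hP.vSum_partition
    (g := fun q : {q : Qt n k // Φ q.1} => (q.1.1.1 0, q.1.1.2 0))
    (f := fun q : {q : Qt n k // Φ q.1} => P.iProd (pathEntry M i a q.1.1.1 q.1.1.2))
  have hprod :
      P.vSum (fun x : ℕ × Fin n =>
        P.vSum (fun q : {q : {q : Qt n k // Φ q.1} // (q.1.1.1 0, q.1.1.2 0) = x} =>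
          P.iProd (pathEntry M i a q.1.1.1.1 q.1.1.1.2)))
      = P.vSum (fun l : ℕ => P.vSum (fun c : Fin n =>
          P.vSum (fun q : {q : {q : Qt n k // Φ q.1} // (q.1.1.1 0, q.1.1.2 0) = (l, c)} =>
            P.iProd (pathEntry M i a q.1.1.1.1 q.1.1.1.2)))) := by
    exact vSum_prod_left hP (fun l c =>
      P.vSum (fun q : {q : {q : Qt n k // Φ q.1} // (q.1.1.1 0, q.1.1.2 0) = (l, c)} =>
        P.iProd (pathEntry M i a q.1.1.1.1 q.1.1.1.2)))
  refine hpart.symm.trans (hprod.trans ?_)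
  refine vSum_congr P (fun l => vSum_congr P (fun c => ?_))
  -- fixed (l, c)
  have hval : ∀ x : {q : {q : Qt n k // Φ q.1} // (q.1.1.1 0, q.1.1.2 0) = (l, c)},
      P.iProd (pathEntry M i a x.1.1.1.1 x.1.1.1.2)
        = P.smul (M i l a c)
            (P.iProd (pathEntry M l c (fun t => x.1.1.1.1 (t + 1))
              (fun t => x.1.1.1.2 (t + 1)))) := by
    intro x
    have h : x.1.1.1.1 0 = l := congrArg Prod.fst x.2
    have h' : x.1.1.1.2 0 = c := congrArg Prod.snd x.2
    rw [iProd_peel hP M i a x.1.1.1.1 x.1.1.1.2, h, h']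
  rw [vSum_congr P hval]
  rw [← hP.smul_vSum]
  refine congrArg (P.smul (M i l a c)) ?_
  exact (vSum_reindex hP (peelEquiv Φ l c)
    (fun x : {q : {q : Qt n k // Φ q.1} // (q.1.1.1 0, q.1.1.2 0) = (l, c)} =>
      P.iProd (pathEntry M l c (fun t => x.1.1.1.1 (t + 1)) (fun t => x.1.1.1.2 (t + 1))))).symm

lemma Hv_peel (hP : P.IsComplete R) (M : IMat n S) {k : ℕ} (i : ℕ) (a : Fin n) :
    Hv P M k i a = P.vSum (fun l : ℕ => P.vSum (fun c : Fin n =>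
      P.smul (M i l a c)
        (P.vSum (fun q : {q : Qt n k // 1 ≤ l ∧ True} =>
          P.iProd (pathEntry M l c q.1.1.1 q.1.1.2))))) := by
  rw [← Hv_subtype hP M (fun q : Qt n k => (fun _ => True) q.1) (fun _ => trivial) i a]
  exact peel hP M (fun _ => True) i a



/-! ### Entries of matrix powers -/

lemma pow_succ_entry (M : IMat n S) (m i j : ℕ) (a b : Fin n) :
    iMatPow R M (m + 1) i j a b
      = R.iSum (fun l : ℕ => R.iSum (fun c : Fin n =>
          R.mul (M i l a c) (iMatPow R M m l j c b))) := rfl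

lemma pow_one_entry (hR : R.IsComplete) (M : IMat n S) (i j : ℕ) (a b : Fin n) :
    iMatPow R M 1 i j a b = M i j a b := by
  have h : iMatPow R M 1 i j a b
      = R.iSum (fun l : ℕ => R.iSum (fun c : Fin n =>
          R.mul (M i l a c) (iMatOne R l j c b))) := rfl
  rw [h]
  have h1 : ∀ l : ℕ, l ≠ j → R.iSum (fun c : Fin n =>
      R.mul (M i l a c) (iMatOne R l j c b)) = R.zero := by
    intro l hl
    refine rSum_eq_zero hR (fun c => ?_)
    have hz : iMatOne R l j c b = R.zero := by
      show (if l = j then bOne R else bZero R) c b = R.zero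
      rw [if_neg hl]; rfl
    rw [hz, hR.mul_zero]
  rw [rSum_eq_single hR _ j h1]
  have h2 : ∀ c : Fin n, c ≠ b → R.mul (M i j a c) (iMatOne R j j c b) = R.zero := by
    intro c hc
    have hz : iMatOne R j j c b = R.zero := by
      show (if j = j then bOne R else bZero R) c b = R.zero
      rw [if_pos rfl]
      show (if c = b then R.one else R.zero) = R.zero
      rw [if_neg hc]
    rw [hz, hR.mul_zero]
  rw [rSum_eq_single hR _ b h2]
  have hone : iMatOne R j j b b = R.one := by
    show (if j = j then bOne R else bZero R) b b = R.one
    rw [if_pos rfl]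
    show (if b = b then R.one else R.zero) = R.one
    rw [if_pos rfl]
  rw [hone, hR.mul_one]

lemma pow_row0 (hR : R.IsComplete) {M : IMat n S} (hM : IsRoc R M) (m j : ℕ) (a b : Fin n) :
    iMatPow R M (m + 1) 0 j a b = R.zero := by
  rw [pow_succ_entry M m 0 j a b]
  refine rSum_eq_zero hR (fun l => rSum_eq_zero hR (fun c => ?_))
  have hz : M 0 l a c = R.zero := by rw [M_row0 hM l]; rfl
  rw [hz, hR.zero_mul]

lemma pow_expand (hR : R.IsComplete) {M : IMat n S} (hM : IsRoc R M) (m x : ℕ) (a b : Fin n) :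
    iMatPow R M (m + 2) (x + 1) 0 a b
      = R.iSum (fun μ : ℕ => R.iSum (fun c : Fin n =>
          R.mul (M (x + 2) (μ + 2) a c) (iMatPow R M (m + 1) (μ + 1) 0 c b))) := by
  have h : iMatPow R M (m + 2) (x + 1) 0 a b
      = R.iSum (fun l : ℕ => R.iSum (fun c : Fin n =>
          R.mul (M (x + 1) l a c) (iMatPow R M (m + 1) l 0 c b))) :=
    pow_succ_entry M (m + 1) (x + 1) 0 a b
  rw [h]
  have h0 : R.iSum (fun c : Fin n =>
      R.mul (M (x + 1) 0 a c) (iMatPow R M (m + 1) 0 0 c b)) = R.zero := by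
    refine rSum_eq_zero hR (fun c => ?_)
    rw [pow_row0 hR hM m 0 c b, hR.mul_zero]
  rw [rSum_drop_one hR _ h0]
  refine rSum_congr R (fun μ => rSum_congr R (fun c => ?_))
  have hsh : M (x + 2) (μ + 2) = M (x + 1) (μ + 1) := shiftM hM x (μ + 1)
  rw [hsh]

/-! ### The first-hit decomposition -/

def FHp (m : ℕ) : ((ℕ → ℕ) × (ℕ → Fin n)) → Prop :=
  fun rq => rq.1 m = 1 ∧ ∀ t, t < m → rq.1 t ≠ 1

def Wv (P : CPOps S V) (M : IMat n S) (k m x : ℕ) (a : Fin n) : V :=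
  P.vSum (fun q : {q : Qt n k // FHp m q.1} =>
    P.iProd (pathEntry M (x + 2) a q.1.1.1 q.1.1.2))

lemma consR_FHp_zero (l : ℕ) (c : Fin n) (rq : (ℕ → ℕ) × (ℕ → Fin n)) :
    FHp 0 (consR l c rq) ↔ l = 1 := by
  constructor
  · intro h; exact h.1
  · intro h; exact ⟨h, fun t ht => absurd ht (by omega)⟩

lemma consR_FHp_succ (m l : ℕ) (c : Fin n) (rq : (ℕ → ℕ) × (ℕ → Fin n)) :
    FHp (m + 1) (consR l c rq) ↔ (l ≠ 1 ∧ FHp m rq) := by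
  constructor
  · rintro ⟨h1, h2⟩
    exact ⟨h2 0 (by omega), ⟨h1, fun t ht => h2 (t + 1) (by omega)⟩⟩
  · rintro ⟨h0, h1, h2⟩
    refine ⟨h1, fun t ht => ?_⟩
    cases t with
    | zero => exact h0
    | succ t' => exact h2 t' (by omega)

lemma powV (hR : R.IsComplete) (hP : P.IsComplete R) {M : IMat n S} (hM : IsRoc R M)
    {k : ℕ} : ∀ (m x : ℕ) (a : Fin n),
    Wv P M k m x a = P.vSum (fun b : Fin n =>
      P.smul (iMatPow R M (m + 1) (x + 1) 0 a b) (Hv P M k 1 b)) := by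
  intro m
  induction m with
  | zero =>
    intro x a
    show Wv P M k 0 x a = P.vSum (fun b : Fin n =>
      P.smul (iMatPow R M 1 (x + 1) 0 a b) (Hv P M k 1 b))
    refine (peel hP M (FHp 0) (x + 2) a).trans ?_
    have hz : ∀ l : ℕ, l ≠ 1 →
        P.vSum (fun c : Fin n => P.smul (M (x + 2) l a c)
          (P.vSum (fun q : {q : Qt n k // 1 ≤ l ∧ FHp 0 (consR l c q.1)} =>
            P.iProd (pathEntry M l c q.1.1.1 q.1.1.2)))) = P.vzero := by
      intro l hl
      refine vSum_eq_zero hP (fun c => ?_)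
      haveI : IsEmpty {q : Qt n k // 1 ≤ l ∧ FHp 0 (consR l c q.1)} :=
        ⟨fun q => hl ((consR_FHp_zero l c q.1.1).mp q.2.2)⟩
      rw [hP.vSum_empty _ this, hP.smul_vzero]
    refine (vSum_eq_single hP _ 1 hz).trans ?_
    refine vSum_congr P (fun c => ?_)
    have h1 : P.vSum (fun q : {q : Qt n k // 1 ≤ 1 ∧ FHp 0 (consR 1 c q.1)} =>
        P.iProd (pathEntry M 1 c q.1.1.1 q.1.1.2)) = Hv P M k 1 c :=
      Hv_subtype hP M _ (fun q => ⟨le_refl 1, (consR_FHp_zero 1 c q.1).mpr rfl⟩) 1 c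
    refine congrArg₂ P.smul ?_ h1
    have h2 : iMatPow R M 1 (x + 1) 0 a c = M (x + 1) 0 a c := pow_one_entry hR M (x + 1) 0 a c
    have hsh : M (x + 2) 1 = M (x + 1) 0 := shiftM hM x 0
    rw [h2, hsh]
  | succ m ih =>
    intro x a
    show Wv P M k (m + 1) x a = P.vSum (fun b : Fin n =>
      P.smul (iMatPow R M (m + 2) (x + 1) 0 a b) (Hv P M k 1 b))
    refine (peel hP M (FHp (m + 1)) (x + 2) a).trans ?_
    have h0 : P.vSum (fun c : Fin n => P.smul (M (x + 2) 0 a c)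
        (P.vSum (fun q : {q : Qt n k // 1 ≤ 0 ∧ FHp (m + 1) (consR 0 c q.1)} =>
          P.iProd (pathEntry M 0 c q.1.1.1 q.1.1.2)))) = P.vzero := by
      refine vSum_eq_zero hP (fun c => ?_)
      haveI : IsEmpty {q : Qt n k // 1 ≤ 0 ∧ FHp (m + 1) (consR 0 c q.1)} :=
        ⟨fun q => by omega⟩
      rw [hP.vSum_empty _ this, hP.smul_vzero]
    have h1 : P.vSum (fun c : Fin n => P.smul (M (x + 2) 1 a c)
        (P.vSum (fun q : {q : Qt n k // 1 ≤ 1 ∧ FHp (m + 1) (consR 1 c q.1)} =>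
          P.iProd (pathEntry M 1 c q.1.1.1 q.1.1.2)))) = P.vzero := by
      refine vSum_eq_zero hP (fun c => ?_)
      haveI : IsEmpty {q : Qt n k // 1 ≤ 1 ∧ FHp (m + 1) (consR 1 c q.1)} :=
        ⟨fun q => ((consR_FHp_succ m 1 c q.1.1).mp q.2.2).1 rfl⟩
      rw [hP.vSum_empty _ this, hP.smul_vzero]
    refine (vSum_drop_two hP _ h0 h1).trans ?_
    have hstep : ∀ μ : ℕ,
        P.vSum (fun c : Fin n => P.smul (M (x + 2) (μ + 2) a c)
          (P.vSum (fun q : {q : Qt n k // 1 ≤ μ + 2 ∧ FHp (m + 1) (consR (μ + 2) c q.1)} =>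
            P.iProd (pathEntry M (μ + 2) c q.1.1.1 q.1.1.2))))
        = P.vSum (fun c : Fin n => P.vSum (fun b : Fin n =>
            P.smul (R.mul (M (x + 2) (μ + 2) a c) (iMatPow R M (m + 1) (μ + 1) 0 c b))
              (Hv P M k 1 b))) := by
      intro μ
      refine vSum_congr P (fun c => ?_)
      have hin : P.vSum (fun q : {q : Qt n k // 1 ≤ μ + 2 ∧ FHp (m + 1) (consR (μ + 2) c q.1)} =>
          P.iProd (pathEntry M (μ + 2) c q.1.1.1 q.1.1.2)) = Wv P M k m μ c :=
        vSum_subtype_iff hP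
          (fun q : Qt n k => ⟨fun h => ((consR_FHp_succ m (μ + 2) c q.1).mp h.2).2,
            fun h => ⟨by omega, (consR_FHp_succ m (μ + 2) c q.1).mpr ⟨by omega, h⟩⟩⟩)
          (fun q : Qt n k => P.iProd (pathEntry M (μ + 2) c q.1.1 q.1.2))
      rw [hin, ih μ c, hP.smul_vSum]
      refine vSum_congr P (fun b => ?_)
      rw [← hP.mul_smul]
    refine (vSum_congr P hstep).trans ?_
    -- now commute the sums and use pow_expand
    have htarget : ∀ b : Fin n,
        P.smul (iMatPow R M (m + 2) (x + 1) 0 a b) (Hv P M k 1 b)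
        = P.vSum (fun μ : ℕ => P.vSum (fun c : Fin n =>
            P.smul (R.mul (M (x + 2) (μ + 2) a c) (iMatPow R M (m + 1) (μ + 1) 0 c b))
              (Hv P M k 1 b))) := by
      intro b
      rw [pow_expand hR hM m x a b, hP.iSum_smul]
      refine vSum_congr P (fun μ => ?_)
      rw [hP.iSum_smul]
    refine Eq.trans ?_ (vSum_congr P (fun b => (htarget b).symm))
    -- goal : vSum_μ vSum_c vSum_b = vSum_b vSum_μ vSum_c
    calc P.vSum (fun μ : ℕ => P.vSum (fun c : Fin n => P.vSum (fun b : Fin n =>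
            P.smul (R.mul (M (x + 2) (μ + 2) a c) (iMatPow R M (m + 1) (μ + 1) 0 c b))
              (Hv P M k 1 b))))
        = P.vSum (fun μ : ℕ => P.vSum (fun b : Fin n => P.vSum (fun c : Fin n =>
            P.smul (R.mul (M (x + 2) (μ + 2) a c) (iMatPow R M (m + 1) (μ + 1) 0 c b))
              (Hv P M k 1 b)))) := vSum_congr P (fun μ => vSum_comm hP _)
      _ = P.vSum (fun b : Fin n => P.vSum (fun μ : ℕ => P.vSum (fun c : Fin n =>
            P.smul (R.mul (M (x + 2) (μ + 2) a c) (iMatPow R M (m + 1) (μ + 1) 0 c b))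
              (Hv P M k 1 b)))) := vSum_comm hP _



/-! ### Step 1: first-step decomposition of `H 1` -/

lemma step1 (hP : P.IsComplete R) {M : IMat n S} (hM : IsRoc R M) {k : ℕ} (a : Fin n) :
    Hv P M k 1 a = P.vadd
      (P.vSum (fun c : Fin n => P.smul (M 1 2 a c) (Hv P M k 2 c)))
      (P.vSum (fun c : Fin n => P.smul (M 1 1 a c) (Hv P M k 1 c))) := by
  have hz : ∀ l : ℕ, l ≠ 2 → l ≠ 1 →
      P.vSum (fun c : Fin n => P.smul (M 1 l a c)
        (P.vSum (fun q : {q : Qt n k // 1 ≤ l ∧ True} =>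
          P.iProd (pathEntry M l c q.1.1.1 q.1.1.2)))) = P.vzero := by
    intro l h2 h1
    by_cases hl0 : l = 0
    · subst hl0
      refine vSum_eq_zero hP (fun c => ?_)
      haveI : IsEmpty {q : Qt n k // 1 ≤ 0 ∧ True} := ⟨fun q => by omega⟩
      rw [hP.vSum_empty _ this, hP.smul_vzero]
    · refine vSum_eq_zero hP (fun c => ?_)
      have hzz : M 1 l a c = R.zero := by
        rw [M_one_ge3 hM (by omega : 3 ≤ l)]; rfl
      rw [hzz, hP.zero_smul]
  refine (Hv_peel hP M 1 a).trans ((vSum_eq_pair hP _ 2 1 (by omega) hz).trans ?_)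
  refine congrArg₂ P.vadd ?_ ?_
  · exact vSum_congr P (fun c => congrArg (P.smul (M 1 2 a c))
      (Hv_subtype hP M (fun q : Qt n k => 1 ≤ 2 ∧ True) (fun q => ⟨by omega, trivial⟩) 2 c))
  · exact vSum_congr P (fun c => congrArg (P.smul (M 1 1 a c))
      (Hv_subtype hP M (fun q : Qt n k => 1 ≤ 1 ∧ True) (fun q => ⟨by omega, trivial⟩) 1 c))

/-! ### Step 2: decomposition of `H 2` by the first return to counter value 1 -/

lemma star_entry_drop (hR : R.IsComplete) (M : IMat n S) (l b : Fin n) :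
    iStar R M 1 0 l b = R.iSum (fun m : ℕ => iMatPow R M (m + 1) 1 0 l b) := by
  have h0 : iMatPow R M 0 1 0 l b = R.zero := by
    show (if (1 : ℕ) = 0 then bOne R else bZero R) l b = R.zero
    rw [if_neg (by omega)]; rfl
  exact rSum_drop_one hR (fun m : ℕ => iMatPow R M m 1 0 l b) h0

lemma step2 (hR : R.IsComplete) (hP : P.IsComplete R) {M : IMat n S} (hM : IsRoc R M)
    {k : ℕ} (l : Fin n) :
    Hv P M k 2 l = P.vadd
      (P.vSum (fun b : Fin n => P.smul (iStar R M 1 0 l b) (Hv P M k 1 b)))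
      (Hv P M k 1 l) := by
  classical
  refine (vSum_split hP (fun q : Qt n k => ∃ t, q.1.1 t = 1)
      (fun q : Qt n k => P.iProd (pathEntry M 2 l q.1.1 q.1.2))).trans ?_
  refine congrArg₂ P.vadd ?_ ?_
  · -- returning part
    have hpart := hP.vSum_partition
      (g := fun q : {q : Qt n k // ∃ t, q.1.1 t = 1} => Nat.find q.2)
      (f := fun q : {q : Qt n k // ∃ t, q.1.1 t = 1} =>
        P.iProd (pathEntry M 2 l q.1.1.1 q.1.1.2))
    refine hpart.symm.trans ?_
    have hfib : ∀ m : ℕ,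
        P.vSum (fun x : {q : {q : Qt n k // ∃ t, q.1.1 t = 1} // Nat.find q.2 = m} =>
          P.iProd (pathEntry M 2 l x.1.1.1.1 x.1.1.1.2)) = Wv P M k m 0 l := by
      intro m
      exact (vSum_reindex hP
        (⟨fun y => ⟨⟨y.1, ⟨m, y.2.1⟩⟩, by
            rw [Nat.find_eq_iff]
            exact ⟨y.2.1, fun t ht => y.2.2 t ht⟩⟩,
          fun x => ⟨x.1.1, by
            have h := (Nat.find_eq_iff x.1.2).mp x.2
            exact ⟨h.1, fun t ht => h.2 t ht⟩⟩,
          fun y => rfl,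
          fun x => by apply Subtype.ext; apply Subtype.ext; rfl⟩ :
          {q : Qt n k // FHp m q.1}
            ≃ {x : {q : Qt n k // ∃ t, q.1.1 t = 1} // Nat.find x.2 = m})
        (fun x : {q : {q : Qt n k // ∃ t, q.1.1 t = 1} // Nat.find q.2 = m} =>
          P.iProd (pathEntry M 2 l x.1.1.1.1 x.1.1.1.2))).symm
    refine (vSum_congr P hfib).trans ?_
    calc P.vSum (fun m : ℕ => Wv P M k m 0 l)
        = P.vSum (fun m : ℕ => P.vSum (fun b : Fin n =>
            P.smul (iMatPow R M (m + 1) 1 0 l b) (Hv P M k 1 b))) :=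
          vSum_congr P (fun m => powV hR hP hM m 0 l)
      _ = P.vSum (fun b : Fin n => P.vSum (fun m : ℕ =>
            P.smul (iMatPow R M (m + 1) 1 0 l b) (Hv P M k 1 b))) := vSum_comm hP _
      _ = P.vSum (fun b : Fin n =>
            P.smul (R.iSum (fun m : ℕ => iMatPow R M (m + 1) 1 0 l b)) (Hv P M k 1 b)) :=
          vSum_congr P (fun b => (hP.iSum_smul _ _).symm)
      _ = P.vSum (fun b : Fin n => P.smul (iStar R M 1 0 l b) (Hv P M k 1 b)) :=
          vSum_congr P (fun b => congrArg (fun s => P.smul s (Hv P M k 1 b))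
            (star_entry_drop hR M l b).symm)
  · -- non-returning part
    refine ((vSum_reindex hP
      (⟨fun q => ⟨⟨(fun t => q.1.1 t + 1, q.1.2),
          ⟨fun t => Nat.le_add_left 1 (q.1.1 t), q.2.2⟩⟩, by
          rintro ⟨t, ht⟩
          have ht' : q.1.1 t + 1 = 1 := ht
          have h1 := q.2.1 t
          omega⟩,
        fun x => ⟨(fun t => x.1.1.1 t - 1, x.1.1.2),
          ⟨fun t => by
            show 1 ≤ x.1.1.1 t - 1
            have h1 := x.1.2.1 t
            have h2 : x.1.1.1 t ≠ 1 := fun hh => x.2 ⟨t, hh⟩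
            omega, x.1.2.2⟩⟩,
        fun q => by
          apply Subtype.ext
          apply Prod.ext
          · funext t
            show q.1.1 t + 1 - 1 = q.1.1 t
            omega
          · rfl,
        fun x => by
          apply Subtype.ext
          apply Subtype.ext
          apply Prod.ext
          · funext t
            show x.1.1.1 t - 1 + 1 = x.1.1.1 t
            have h1 := x.1.2.1 t
            omega
          · rfl⟩ :
        Qt n k ≃ {q : Qt n k // ¬ ∃ t, q.1.1 t = 1})
      (fun x : {q : Qt n k // ¬ ∃ t, q.1.1 t = 1} =>
        P.iProd (pathEntry M 2 l x.1.1.1 x.1.1.2))).symm).trans ?_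
    refine vSum_congr P (fun q => ?_)
    show P.iProd (pathEntry M 2 l (fun t => q.1.1 t + 1) q.1.2)
        = P.iProd (pathEntry M 1 l q.1.1 q.1.2)
    refine congrArg P.iProd (funext fun t => ?_)
    cases t with
    | zero =>
      show M 2 (q.1.1 0 + 1) l (q.1.2 0) = M 1 (q.1.1 0) l (q.1.2 0)
      have hsh : M 2 (q.1.1 0 + 1) = M 1 (q.1.1 0) := shiftM hM 0 (q.1.1 0)
      rw [hsh]
    | succ t =>
      show M (q.1.1 t + 1) (q.1.1 (t + 1) + 1) (q.1.2 t) (q.1.2 (t + 1))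
          = M (q.1.1 t) (q.1.1 (t + 1)) (q.1.2 t) (q.1.2 (t + 1))
      obtain ⟨y, hy⟩ : ∃ y, q.1.1 t = y + 1 := ⟨q.1.1 t - 1, by have := q.2.1 t; omega⟩
      rw [hy]
      have hsh : M (y + 1 + 1) (q.1.1 (t + 1) + 1) = M (y + 1) (q.1.1 (t + 1)) :=
        shiftM hM y (q.1.1 (t + 1))
      rw [hsh]



/-! ### Final assembly -/

lemma main (hR : R.IsComplete) (hP : P.IsComplete R) {M : IMat n S} (hM : IsRoc R M)
    (k : ℕ) : IsLinSol R P M (mOmegaK P M k 1) := by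
  show mOmegaK P M k 1 = matVec P (linMat R M) (mOmegaK P M k 1)
  funext a
  show Hv P M k 1 a = P.vSum (fun c : Fin n => P.smul (linMat R M a c) (Hv P M k 1 c))
  have hU : P.vSum (fun c : Fin n => P.smul (M 1 2 a c)
        (P.vSum (fun b : Fin n => P.smul (iStar R M 1 0 c b) (Hv P M k 1 b))))
      = P.vSum (fun b : Fin n =>
          P.smul (bMul R (M 1 2) (iStar R M 1 0) a b) (Hv P M k 1 b)) := by
    calc P.vSum (fun c : Fin n => P.smul (M 1 2 a c)
            (P.vSum (fun b : Fin n => P.smul (iStar R M 1 0 c b) (Hv P M k 1 b))))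
        = P.vSum (fun c : Fin n => P.vSum (fun b : Fin n =>
            P.smul (M 1 2 a c) (P.smul (iStar R M 1 0 c b) (Hv P M k 1 b)))) :=
          vSum_congr P (fun c => hP.smul_vSum _ _)
      _ = P.vSum (fun c : Fin n => P.vSum (fun b : Fin n =>
            P.smul (R.mul (M 1 2 a c) (iStar R M 1 0 c b)) (Hv P M k 1 b))) :=
          vSum_congr P (fun c => vSum_congr P (fun b => (hP.mul_smul _ _ _).symm))
      _ = P.vSum (fun b : Fin n => P.vSum (fun c : Fin n =>
            P.smul (R.mul (M 1 2 a c) (iStar R M 1 0 c b)) (Hv P M k 1 b))) :=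
          vSum_comm hP _
      _ = P.vSum (fun b : Fin n =>
            P.smul (R.iSum (fun c : Fin n => R.mul (M 1 2 a c) (iStar R M 1 0 c b)))
              (Hv P M k 1 b)) :=
          vSum_congr P (fun b => (hP.iSum_smul _ _).symm)
      _ = P.vSum (fun b : Fin n =>
            P.smul (bMul R (M 1 2) (iStar R M 1 0) a b) (Hv P M k 1 b)) := rfl
  have hA : P.vSum (fun c : Fin n => P.smul (M 1 2 a c) (Hv P M k 2 c))
      = P.vadd
          (P.vSum (fun b : Fin n =>
            P.smul (bMul R (M 1 2) (iStar R M 1 0) a b) (Hv P M k 1 b)))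
          (P.vSum (fun c : Fin n => P.smul (M 1 2 a c) (Hv P M k 1 c))) := by
    calc P.vSum (fun c : Fin n => P.smul (M 1 2 a c) (Hv P M k 2 c))
        = P.vSum (fun c : Fin n => P.smul (M 1 2 a c)
            (P.vadd (P.vSum (fun b : Fin n =>
              P.smul (iStar R M 1 0 c b) (Hv P M k 1 b))) (Hv P M k 1 c))) :=
          vSum_congr P (fun c => congrArg (P.smul (M 1 2 a c)) (step2 hR hP hM c))
      _ = P.vSum (fun c : Fin n => P.vadd
            (P.smul (M 1 2 a c) (P.vSum (fun b : Fin n =>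
              P.smul (iStar R M 1 0 c b) (Hv P M k 1 b))))
            (P.smul (M 1 2 a c) (Hv P M k 1 c))) :=
          vSum_congr P (fun c => hP.smul_vadd _ _ _)
      _ = P.vadd
            (P.vSum (fun c : Fin n => P.smul (M 1 2 a c)
              (P.vSum (fun b : Fin n => P.smul (iStar R M 1 0 c b) (Hv P M k 1 b)))))
            (P.vSum (fun c : Fin n => P.smul (M 1 2 a c) (Hv P M k 1 c))) :=
          vSum_vadd hP _ _
      _ = _ := congrArg₂ P.vadd hU rfl
  have hRHS : P.vSum (fun c : Fin n => P.smul (linMat R M a c) (Hv P M k 1 c))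
      = P.vadd
          (P.vadd
            (P.vSum (fun c : Fin n => P.smul (M 1 2 a c) (Hv P M k 1 c)))
            (P.vSum (fun b : Fin n =>
              P.smul (bMul R (M 1 2) (iStar R M 1 0) a b) (Hv P M k 1 b))))
          (P.vSum (fun c : Fin n => P.smul (M 1 1 a c) (Hv P M k 1 c))) := by
    calc P.vSum (fun c : Fin n => P.smul (linMat R M a c) (Hv P M k 1 c))
        = P.vSum (fun c : Fin n => P.vadd
            (P.vadd (P.smul (M 1 2 a c) (Hv P M k 1 c))
              (P.smul (bMul R (M 1 2) (iStar R M 1 0) a c) (Hv P M k 1 c)))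
            (P.smul (M 1 1 a c) (Hv P M k 1 c))) := by
          refine vSum_congr P (fun c => ?_)
          show P.smul (R.add (R.add (M 1 2 a c) (bMul R (M 1 2) (iStar R M 1 0) a c))
              (M 1 1 a c)) (Hv P M k 1 c) = _
          rw [hP.add_smul, hP.add_smul]
      _ = P.vadd
            (P.vSum (fun c : Fin n => P.vadd (P.smul (M 1 2 a c) (Hv P M k 1 c))
              (P.smul (bMul R (M 1 2) (iStar R M 1 0) a c) (Hv P M k 1 c))))
            (P.vSum (fun c : Fin n => P.smul (M 1 1 a c) (Hv P M k 1 c))) :=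
          vSum_vadd hP _ _
      _ = _ := congrArg₂ P.vadd (vSum_vadd hP _ _) rfl
  calc Hv P M k 1 a
      = P.vadd (P.vSum (fun c : Fin n => P.smul (M 1 2 a c) (Hv P M k 2 c)))
          (P.vSum (fun c : Fin n => P.smul (M 1 1 a c) (Hv P M k 1 c))) := step1 hP hM a
    _ = P.vadd (P.vadd
          (P.vSum (fun b : Fin n =>
            P.smul (bMul R (M 1 2) (iStar R M 1 0) a b) (Hv P M k 1 b)))
          (P.vSum (fun c : Fin n => P.smul (M 1 2 a c) (Hv P M k 1 c))))
        (P.vSum (fun c : Fin n => P.smul (M 1 1 a c) (Hv P M k 1 c))) :=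
        congrArg₂ P.vadd hA rfl
    _ = P.vadd (P.vadd
          (P.vSum (fun c : Fin n => P.smul (M 1 2 a c) (Hv P M k 1 c)))
          (P.vSum (fun b : Fin n =>
            P.smul (bMul R (M 1 2) (iStar R M 1 0) a b) (Hv P M k 1 b))))
        (P.vSum (fun c : Fin n => P.smul (M 1 1 a c) (Hv P M k 1 c))) :=
        congrArg₂ P.vadd (hP.vadd_comm _ _) rfl
    _ = P.vSum (fun c : Fin n => P.smul (linMat R M a c) (Hv P M k 1 c)) := hRHS.symm


end Stmt7

/-- Let `(S, V)` be a complete semiring-semimodule pair and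
`M ∈ (S^{n×n})^{p*×p*}` a roc matrix with counter symbol `p`. Then for all
`0 ≤ k ≤ n`, the vector `(M^{ω,k})_p ∈ V^n` is a solution of the linear
equation `z = (M_{p,p²} + M_{p,p²}(M*)_{p,ε} + M_{p,p}) z` over `V^n`. -/
theorem stmt_7 {S V : Type} (R : CSOps S) (P : CPOps S V) (hR : R.IsComplete)
    (hP : P.IsComplete R) {n : ℕ} (hn : 1 ≤ n) (M : IMat n S) (hM : IsRoc R M) :
    ∀ k : ℕ, k ≤ n → IsLinSol R P M (mOmegaK P M k 1) := by
  intro k _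
  exact Stmt7.main hR hP hM k
end

section
/- Let S be a complete starsemiring and let M be a restricted one-counter (roc) matrix over S^{n×n} with counter symbol p. Then the n×n matrix (M*)_{p,ε} is a solution of the algebraic system x = M_{p,p²}·x·x + M_{p,p}·x + M_{p,ε} over S^{n×n}. If S is moreover a continuous starsemiring, then (M*)_{p,ε} is the least solution of this system. -/
/-! ### Auxiliary development for `stmt_8` -/

namespace Stmt8Aux

variable {S : Type}

/-- The natural order of a semiring. -/
def sle (R : CSOps S) (a b : S) : Prop := ∃ c, R.add a c = b

theorem iSum_ext {R : CSOps S} {ι : Type} {f g : ι → S} (h : ∀ i, f i = g i) :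
    R.iSum f = R.iSum g := congrArg _ (funext h)

/-- Bundled equivalence constructor. -/
def mkEquiv {ι κ : Type} (toF : ι → κ) (invF : κ → ι)
    (h1 : ∀ i, invF (toF i) = i) (h2 : ∀ k, toF (invF k) = k) : ι ≃ κ :=
  ⟨toF, invF, h1, h2⟩

section Sums

variable {R : CSOps S} (hR : R.IsComplete)
include hR

theorem radd_zero (a : S) : R.add a R.zero = a := by
  rw [hR.add_comm]; exact hR.zero_add a

theorem iSum_zero {ι : Type} : R.iSum (fun _ : ι => R.zero) = R.zero := by
  have h : R.iSum (fun _ : ι => R.zero) = R.mul R.zero (R.iSum (fun _ : ι => R.zero)) := by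
    rw [hR.mul_iSum]
    exact iSum_ext (fun _ => (hR.zero_mul R.zero).symm)
  rw [h, hR.zero_mul]

theorem iSum_reindex {ι κ : Type} (e : ι ≃ κ) (f : ι → S) (g : κ → S)
    (h : ∀ i, f i = g (e i)) : R.iSum f = R.iSum g := by
  have hp := hR.iSum_partition (fun i => e i) f
  rw [← hp]
  refine iSum_ext (fun j => ?_)
  rw [hR.iSum_single _ ⟨e.symm j, e.apply_symm_apply j⟩
    (fun i => Subtype.ext (by rw [Equiv.eq_symm_apply]; exact i.2))]
  rw [h, e.apply_symm_apply]

theorem iSum_split {ι : Type} (p : ι → Prop) (f : ι → S) :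
    R.iSum f = R.add (R.iSum fun i : {i // p i} => f i.1)
      (R.iSum fun i : {i // ¬ p i} => f i.1) := by
  classical
  have hp := hR.iSum_partition (fun i => decide (p i)) f
  have hb := hR.iSum_pair (fun b : Bool => R.iSum (fun i : {i : ι // decide (p i) = b} => f i.1))
    true false (by simp) (fun b => by cases b <;> simp)
  have key := hp.symm.trans hb
  rw [key]
  congr 1
  · exact iSum_reindex hR
      (mkEquiv (fun i : {i : ι // decide (p i) = true} => (⟨i.1, of_decide_eq_true i.2⟩ : {i // p i}))
        (fun i => ⟨i.1, decide_eq_true i.2⟩) (fun i => Subtype.ext rfl) (fun i => Subtype.ext rfl))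
      _ _ (fun i => rfl)
  · exact iSum_reindex hR
      (mkEquiv (fun i : {i : ι // decide (p i) = false} => (⟨i.1, of_decide_eq_false i.2⟩ : {i // ¬ p i}))
        (fun i => ⟨i.1, decide_eq_false i.2⟩) (fun i => Subtype.ext rfl) (fun i => Subtype.ext rfl))
      _ _ (fun i => rfl)

theorem iSum_eq_of_ne {ι : Type} (f : ι → S) (i₀ : ι)
    (hz : ∀ i, i ≠ i₀ → f i = R.zero) : R.iSum f = f i₀ := by
  rw [iSum_split hR (fun i => i = i₀) f,
    hR.iSum_single _ (⟨i₀, rfl⟩ : {i // i = i₀}) (fun i => Subtype.ext i.2),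
    iSum_ext (fun i : {i // ¬ i = i₀} => hz i.1 i.2), iSum_zero hR, radd_zero hR]

theorem iSum_two {ι : Type} (f : ι → S) (i₁ i₂ : ι) (h12 : i₁ ≠ i₂)
    (hz : ∀ i, i ≠ i₁ → i ≠ i₂ → f i = R.zero) :
    R.iSum f = R.add (f i₁) (f i₂) := by
  rw [iSum_split hR (fun i => i = i₁) f,
    hR.iSum_single _ (⟨i₁, rfl⟩ : {i // i = i₁}) (fun i => Subtype.ext i.2)]
  congr 1
  exact iSum_eq_of_ne hR _ (⟨i₂, fun h => h12 h.symm⟩ : {i // ¬ i = i₁})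
    (fun i hi => hz i.1 i.2 (fun h => hi (Subtype.ext h)))

theorem iSum_three {ι : Type} (f : ι → S) (i₁ i₂ i₃ : ι) (h12 : i₁ ≠ i₂) (h13 : i₁ ≠ i₃)
    (h23 : i₂ ≠ i₃) (hz : ∀ i, i ≠ i₁ → i ≠ i₂ → i ≠ i₃ → f i = R.zero) :
    R.iSum f = R.add (f i₁) (R.add (f i₂) (f i₃)) := by
  rw [iSum_split hR (fun i => i = i₁) f,
    hR.iSum_single _ (⟨i₁, rfl⟩ : {i // i = i₁}) (fun i => Subtype.ext i.2)]
  congr 1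
  exact iSum_two hR _ (⟨i₂, fun h => h12 h.symm⟩ : {i // ¬ i = i₁})
    (⟨i₃, fun h => h13 h.symm⟩ : {i // ¬ i = i₁})
    (fun h => h23 (congrArg Subtype.val h))
    (fun i hi2 hi3 => hz i.1 i.2 (fun h => hi2 (Subtype.ext h)) (fun h => hi3 (Subtype.ext h)))

theorem iSum_prod {ι κ : Type} (f : ι × κ → S) :
    R.iSum f = R.iSum fun i => R.iSum fun k => f (i, k) := by
  rw [← hR.iSum_partition Prod.fst f]
  refine iSum_ext (fun i => ?_)
  exact (iSum_reindex hR
    (mkEquiv (fun k : κ => (⟨(i, k), rfl⟩ : {q : ι × κ // q.1 = i})) (fun q => q.1.2)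
      (fun k => rfl)
      (fun q => by obtain ⟨⟨x, y⟩, hq⟩ := q; cases hq; rfl))
    _ _ (fun k => rfl)).symm

theorem iSum_prod' {ι κ : Type} (f : ι × κ → S) :
    R.iSum f = R.iSum fun k => R.iSum fun i => f (i, k) := by
  rw [← hR.iSum_partition Prod.snd f]
  refine iSum_ext (fun k => ?_)
  exact (iSum_reindex hR
    (mkEquiv (fun i : ι => (⟨(i, k), rfl⟩ : {q : ι × κ // q.2 = k})) (fun q => q.1.1)
      (fun i => rfl)
      (fun q => by obtain ⟨⟨x, y⟩, hq⟩ := q; cases hq; rfl))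
    _ _ (fun i => rfl)).symm

theorem iSum_swap {ι κ : Type} (f : ι → κ → S) :
    R.iSum (fun i => R.iSum fun k => f i k) = R.iSum (fun k => R.iSum fun i => f i k) := by
  rw [← iSum_prod hR (fun q : ι × κ => f q.1 q.2), iSum_prod' hR (fun q : ι × κ => f q.1 q.2)]

theorem iSum_add {ι : Type} (f g : ι → S) :
    R.iSum (fun i => R.add (f i) (g i)) = R.add (R.iSum f) (R.iSum g) := by
  have hb : ∀ h : Bool → S, R.iSum h = R.add (h true) (h false) :=
    fun h => hR.iSum_pair h true false (by simp) (fun b => by cases b <;> simp)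
  have key := iSum_prod hR (fun q : ι × Bool => cond q.2 (f q.1) (g q.1))
  have key2 := iSum_prod' hR (fun q : ι × Bool => cond q.2 (f q.1) (g q.1))
  have h1 : R.iSum (fun q : ι × Bool => cond q.2 (f q.1) (g q.1))
      = R.iSum (fun i => R.add (f i) (g i)) := by
    rw [key]; exact iSum_ext (fun i => hb _)
  have h2 : R.iSum (fun q : ι × Bool => cond q.2 (f q.1) (g q.1))
      = R.add (R.iSum f) (R.iSum g) := by
    rw [key2, hb]
    exact congrArg₂ R.add (iSum_ext fun i => rfl) (iSum_ext fun i => rfl)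
  rw [← h1, h2]

theorem iSum_nat (f : ℕ → S) :
    R.iSum f = R.add (f 0) (R.iSum fun m => f (m + 1)) := by
  rw [iSum_split hR (fun m => m = 0) f,
    hR.iSum_single _ (⟨0, rfl⟩ : {m // m = 0}) (fun i => Subtype.ext i.2)]
  congr 1
  exact (iSum_reindex hR
    (mkEquiv (fun m : ℕ => (⟨m + 1, Nat.succ_ne_zero m⟩ : {m // ¬ m = 0}))
      (fun x => x.1 - 1) (fun m => rfl)
      (fun x => Subtype.ext (show x.1 - 1 + 1 = x.1 by have := x.2; omega)))
    _ _ (fun m => rfl)).symm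

/-! Order lemmas -/

theorem sle_refl (a : S) : sle R a a := ⟨R.zero, radd_zero hR a⟩

theorem sle_of_eq {a b : S} (h : a = b) : sle R a b := h ▸ sle_refl hR a

theorem sle_trans {a b c : S} : sle R a b → sle R b c → sle R a c
  | ⟨u, hu⟩, ⟨v, hv⟩ => ⟨R.add u v, by rw [← hR.add_assoc, hu, hv]⟩

theorem zero_sle (a : S) : sle R R.zero a := ⟨a, hR.zero_add a⟩

theorem add_add_add (a b c d : S) :
    R.add (R.add a b) (R.add c d) = R.add (R.add a c) (R.add b d) := by
  rw [hR.add_assoc, ← hR.add_assoc b c d, hR.add_comm b c, hR.add_assoc c b d, ← hR.add_assoc]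

theorem add_sle_add {a b c d : S} : sle R a b → sle R c d → sle R (R.add a c) (R.add b d)
  | ⟨u, hu⟩, ⟨v, hv⟩ => ⟨R.add u v, by rw [add_add_add hR, hu, hv]⟩

theorem mul_sle_left (c : S) {a b : S} : sle R a b → sle R (R.mul c a) (R.mul c b)
  | ⟨u, hu⟩ => ⟨R.mul c u, by rw [← hR.left_distrib, hu]⟩

theorem iSum_sle {ι : Type} {f g : ι → S} (h : ∀ i, sle R (f i) (g i)) :
    sle R (R.iSum f) (R.iSum g) := by
  refine ⟨R.iSum (fun i => Classical.choose (h i)), ?_⟩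
  rw [← iSum_add hR]
  exact iSum_ext (fun i => Classical.choose_spec (h i))

/-! Finite partial sums -/

end Sums

def pSum (R : CSOps S) (f : ℕ → S) : ℕ → S
  | 0 => R.zero
  | N + 1 => R.add (pSum R f N) (f N)

section PSums

variable {R : CSOps S} (hR : R.IsComplete)
include hR

theorem pSum_shift (f : ℕ → S) (N : ℕ) :
    pSum R f (N + 1) = R.add (f 0) (pSum R (fun m => f (m + 1)) N) := by
  induction N with
  | zero => show R.add R.zero (f 0) = R.add (f 0) R.zero
            rw [hR.zero_add, radd_zero hR]
  | succ N ih =>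
    show R.add (pSum R f (N + 1)) (f (N + 1)) = _
    rw [ih, hR.add_assoc]
    rfl

theorem pSum_zero (N : ℕ) : pSum R (fun _ => R.zero) N = R.zero := by
  induction N with
  | zero => rfl
  | succ N ih => show R.add _ R.zero = R.zero; rw [radd_zero hR, ih]

theorem pSum_add (f g : ℕ → S) (N : ℕ) :
    pSum R (fun m => R.add (f m) (g m)) N = R.add (pSum R f N) (pSum R g N) := by
  induction N with
  | zero => exact (radd_zero hR R.zero).symm
  | succ N ih => show R.add _ _ = _
                 rw [ih]
                 exact add_add_add hR _ _ _ _

theorem pSum_mul_left (c : S) (f : ℕ → S) (N : ℕ) :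
    pSum R (fun m => R.mul c (f m)) N = R.mul c (pSum R f N) := by
  induction N with
  | zero => exact (hR.mul_zero c).symm
  | succ N ih => show R.add _ _ = _
                 rw [ih, ← hR.left_distrib]
                 rfl

theorem pSum_iSum {ι : Type} (f : ℕ → ι → S) (N : ℕ) :
    pSum R (fun m => R.iSum (f m)) N = R.iSum (fun i => pSum R (fun m => f m i) N) := by
  induction N with
  | zero => exact (iSum_zero hR).symm
  | succ N ih => show R.add _ _ = _
                 rw [ih, ← iSum_add hR]
                 rfl

theorem listSum_perm {l l' : List S} (h : l.Perm l') : R.listSum l = R.listSum l' := by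
  induction h with
  | nil => rfl
  | cons a _ ih => exact congrArg (R.add a) ih
  | swap a b t =>
    show R.add b (R.add a (R.listSum t)) = R.add a (R.add b (R.listSum t))
    rw [← hR.add_assoc, hR.add_comm b a, hR.add_assoc]
  | trans _ _ ih1 ih2 => exact ih1.trans ih2

theorem listSum_le_pSum (f : ℕ → S) (N : ℕ) : ∀ l : List ℕ, l.Nodup → (∀ x ∈ l, x < N) →
    sle R (R.listSum (l.map f)) (pSum R f N) := by
  induction N with
  | zero =>
    intro l _ hb
    have hl : l = [] := by
      cases l with
      | nil => rfl
      | cons a t => exact absurd (hb a (by simp)) (by omega)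
    subst hl
    exact sle_refl hR _
  | succ N ih =>
    intro l hl hb
    by_cases hN : N ∈ l
    · have hp : l.Perm (N :: l.erase N) := List.perm_cons_erase hN
      have h1 : R.listSum (l.map f) = R.add (f N) (R.listSum ((l.erase N).map f)) := by
        rw [listSum_perm hR (hp.map f)]; rfl
      obtain ⟨c, hc⟩ := ih (l.erase N) (hl.erase N) (fun x hx => by
        have hxl := (List.Nodup.mem_erase_iff hl).mp hx
        have := hb x hxl.2
        omega)
      refine ⟨c, ?_⟩
      show R.add (R.listSum (l.map f)) c = R.add (pSum R f N) (f N)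
      rw [h1, hR.add_assoc, hR.add_comm (f N), hc]
    · obtain ⟨c, hc⟩ := ih l hl (fun x hx => by
        have h1 := hb x hx
        have h2 : x ≠ N := fun h => hN (h ▸ hx)
        omega)
      refine ⟨R.add c (f N), ?_⟩
      show R.add (R.listSum (l.map f)) (R.add c (f N)) = R.add (pSum R f N) (f N)
      rw [← hR.add_assoc, hc]

end PSums

theorem le_foldr_max : ∀ (l : List ℕ), ∀ x ∈ l, x ≤ l.foldr max 0 := by
  intro l
  induction l with
  | nil => intro x hx; cases hx
  | cons a t ih =>
    intro x hx
    rcases List.mem_cons.mp hx with h | h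
    · subst h; exact le_max_left _ _
    · exact le_trans (ih x h) (le_max_right _ _)

/-! ### Block lemmas -/

section Blocks

variable {R : CSOps S} (hR : R.IsComplete) {n : ℕ}
include hR

theorem bMul_zero_left (Z : Blk n S) (a b : Fin n) : bMul R (bZero R) Z a b = R.zero := by
  show R.iSum (fun l => R.mul R.zero (Z l b)) = R.zero
  rw [iSum_ext (fun l => hR.zero_mul (Z l b))]
  exact iSum_zero hR

theorem bMul_zero_right (Z : Blk n S) (a b : Fin n) : bMul R Z (bZero R) a b = R.zero := by
  show R.iSum (fun l => R.mul (Z a l) R.zero) = R.zero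
  rw [iSum_ext (fun l => hR.mul_zero (Z a l))]
  exact iSum_zero hR

theorem bMul_one_left (Z : Blk n S) (a b : Fin n) : bMul R (bOne R) Z a b = Z a b := by
  show R.iSum (fun l => R.mul (bOne R a l) (Z l b)) = Z a b
  rw [iSum_eq_of_ne hR _ a (fun l hl => by
    show R.mul (if a = l then R.one else R.zero) (Z l b) = R.zero
    rw [if_neg (fun h => hl h.symm), hR.zero_mul])]
  show R.mul (if a = a then R.one else R.zero) (Z a b) = Z a b
  rw [if_pos rfl, hR.one_mul]

theorem bMul_one_right (Z : Blk n S) (a b : Fin n) : bMul R Z (bOne R) a b = Z a b := by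
  show R.iSum (fun l => R.mul (Z a l) (bOne R l b)) = Z a b
  rw [iSum_eq_of_ne hR _ b (fun l hl => by
    show R.mul (Z a l) (if l = b then R.one else R.zero) = R.zero
    rw [if_neg hl, hR.mul_zero])]
  show R.mul (Z a b) (if b = b then R.one else R.zero) = Z a b
  rw [if_pos rfl, hR.mul_one]

theorem bAdd_bMul (X Y Z : Blk n S) (a b : Fin n) :
    bMul R (bAdd R X Y) Z a b = R.add (bMul R X Z a b) (bMul R Y Z a b) := by
  show R.iSum (fun l => R.mul (R.add (X a l) (Y a l)) (Z l b)) = _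
  rw [iSum_ext (fun l => hR.right_distrib (X a l) (Y a l) (Z l b))]
  exact iSum_add hR _ _

theorem bMul_assoc (X Y Z : Blk n S) (a b : Fin n) :
    bMul R (bMul R X Y) Z a b = bMul R X (bMul R Y Z) a b := by
  show R.iSum (fun l => R.mul (R.iSum fun m => R.mul (X a m) (Y m l)) (Z l b))
      = R.iSum (fun m => R.mul (X a m) (R.iSum fun l => R.mul (Y m l) (Z l b)))
  rw [iSum_ext (fun l => hR.iSum_mul (Z l b) _), iSum_swap hR]
  refine iSum_ext (fun m => ?_)
  rw [hR.mul_iSum]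
  exact iSum_ext (fun l => hR.mul_assoc _ _ _)

theorem bMul_assoc' (X Y Z : Blk n S) :
    bMul R (bMul R X Y) Z = bMul R X (bMul R Y Z) :=
  funext fun a => funext fun b => bMul_assoc hR X Y Z a b

theorem iSum_bMul {ι : Type} (A : Blk n S) (Z : ι → Blk n S) (a b : Fin n) :
    R.iSum (fun q => bMul R A (Z q) a b)
      = bMul R A (fun l c => R.iSum fun q => Z q l c) a b := by
  show R.iSum (fun q => R.iSum fun l => R.mul (A a l) (Z q l b))
      = R.iSum (fun l => R.mul (A a l) (R.iSum fun q => Z q l b))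
  rw [iSum_swap hR]
  exact iSum_ext (fun l => (hR.mul_iSum _ _).symm)

end Blocks

/-! ### Powers of a roc matrix -/

section Roc

variable {R : CSOps S} {n : ℕ}

theorem powZeroSucc (M : IMat n S) (k : ℕ) : iMatPow R M 0 (k + 1) 0 = bZero R := by
  show iMatOne R (k + 1) 0 = bZero R
  simp [iMatOne]

theorem powZeroZero (M : IMat n S) : iMatPow R M 0 0 0 = bOne R := by
  show iMatOne R 0 0 = bOne R
  simp [iMatOne]

theorem row0 (hR : R.IsComplete) (M : IMat n S) (hM : IsRoc R M) (m : ℕ) (j : ℕ) : iMatPow R M (m + 1) 0 j = bZero R := by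
  funext a b
  show R.iSum (fun l : ℕ => bMul R (M 0 l) (iMatPow R M m l j) a b) = R.zero
  have hz : ∀ l : ℕ, bMul R (M 0 l) (iMatPow R M m l j) a b = R.zero := fun l => by
    rw [hM.2 0 l (Or.inl rfl)]
    exact bMul_zero_left hR _ a b
  rw [iSum_ext hz]
  exact iSum_zero hR

theorem powSucc (hR : R.IsComplete) (M : IMat n S) (hM : IsRoc R M) (k m : ℕ) :
    iMatPow R M (m + 1) (k + 1) 0 =
      bAdd R (bMul R (M 1 2) (iMatPow R M m (k + 2) 0))
        (bAdd R (bMul R (M 1 1) (iMatPow R M m (k + 1) 0))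
          (bMul R (M 1 0) (iMatPow R M m k 0))) := by
  funext a b
  show R.iSum (fun l : ℕ => bMul R (M (k + 1) l) (iMatPow R M m l 0) a b) = _
  rw [iSum_three hR _ (k + 2) (k + 1) k (by omega) (by omega) (by omega)
    (fun l h1 h2 h3 => by
      rw [hM.2 (k + 1) l (Or.inr ⟨by omega, by omega, by omega⟩)]
      exact bMul_zero_left hR _ a b)]
  obtain ⟨hA, hC, hB⟩ := hM.1 (k + 1) (by omega)
  have hB' : M (k + 1) k = M 1 0 := by simpa using hB
  rw [hA, hC, hB']
  rfl

/-- The key convolution identity: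
`(M^m)_{k+1,0} = Σ_{r+s=m} (M^r)_{k,0} (M^s)_{1,0}`. -/
theorem Qlem (hR : R.IsComplete) (M : IMat n S) (hM : IsRoc R M) : ∀ m k : ℕ, iMatPow R M m (k + 1) 0 =
    fun a b => R.iSum (fun q : {q : ℕ × ℕ // q.1 + q.2 = m} =>
      bMul R (iMatPow R M q.1.1 k 0) (iMatPow R M q.1.2 1 0) a b) := by
  intro m
  induction m with
  | zero =>
    intro k
    funext a b
    rw [hR.iSum_single _ (⟨(0, 0), rfl⟩ : {q : ℕ × ℕ // q.1 + q.2 = 0})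
      (fun q => by
        obtain ⟨⟨r, s⟩, hq⟩ := q
        have hr : r = 0 := by omega
        have hs : s = 0 := by omega
        subst hr; subst hs; rfl)]
    show iMatPow R M 0 (k + 1) 0 a b = bMul R (iMatPow R M 0 k 0) (iMatPow R M 0 1 0) a b
    rw [powZeroSucc M k, powZeroSucc M 0]
    rw [bMul_zero_right hR]
    rfl
  | succ m ih =>
    intro k
    funext a b
    have hsplit := iSum_split hR (fun q : {q : ℕ × ℕ // q.1 + q.2 = m + 1} => q.1.1 = 0)
      (fun q : {q : ℕ × ℕ // q.1 + q.2 = m + 1} =>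
        bMul R (iMatPow R M q.1.1 k 0) (iMatPow R M q.1.2 1 0) a b)
    rw [hsplit]
    rw [hR.iSum_single _
      (⟨⟨(0, m + 1), by simp⟩, rfl⟩ :
        {q : {q : ℕ × ℕ // q.1 + q.2 = m + 1} // q.1.1 = 0})
      (fun q => by
        obtain ⟨⟨⟨r, s⟩, hq⟩, h0⟩ := q
        have hr : r = 0 := h0
        subst hr
        have hs : s = m + 1 := by omega
        subst hs
        rfl)]
    have hre : R.iSum (fun i : {q : {q : ℕ × ℕ // q.1 + q.2 = m + 1} // ¬ q.1.1 = 0} =>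
        bMul R (iMatPow R M i.1.1.1 k 0) (iMatPow R M i.1.1.2 1 0) a b)
        = R.iSum (fun q : {q : ℕ × ℕ // q.1 + q.2 = m} =>
          bMul R (iMatPow R M (q.1.1 + 1) k 0) (iMatPow R M q.1.2 1 0) a b) := by
      refine (iSum_reindex hR
        (mkEquiv
          (fun q : {q : ℕ × ℕ // q.1 + q.2 = m} =>
            (⟨⟨(q.1.1 + 1, q.1.2), by
                have hq : q.1.1 + q.1.2 = m := q.2
                show q.1.1 + 1 + q.1.2 = m + 1
                omega⟩, Nat.succ_ne_zero _⟩ :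
              {q : {q : ℕ × ℕ // q.1 + q.2 = m + 1} // ¬ q.1.1 = 0}))
          (fun x => ⟨(x.1.1.1 - 1, x.1.1.2), by
            have h : x.1.1.1 + x.1.1.2 = m + 1 := x.1.2
            have h0 : ¬ x.1.1.1 = 0 := x.2
            show x.1.1.1 - 1 + x.1.1.2 = m
            omega⟩)
          (fun q => by
            obtain ⟨⟨r, s⟩, h⟩ := q
            exact Subtype.ext (by simp))
          (fun x => by
            have h0 : ¬ x.1.1.1 = 0 := x.2
            refine Subtype.ext (Subtype.ext ?_)
            show (x.1.1.1 - 1 + 1, x.1.1.2) = x.1.1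
            have h1 : x.1.1.1 - 1 + 1 = x.1.1.1 := by omega
            rw [h1]))
        _ _ (fun q => rfl)).symm
    rw [hre]
    cases k with
    | zero =>
      have hpt : bMul R (iMatPow R M 0 0 0) (iMatPow R M (m + 1) 1 0) a b
          = iMatPow R M (m + 1) 1 0 a b := by
        rw [powZeroZero M]
        exact bMul_one_left hR _ a b
      rw [hpt]
      have hz : ∀ q : {q : ℕ × ℕ // q.1 + q.2 = m},
          bMul R (iMatPow R M (q.1.1 + 1) 0 0) (iMatPow R M q.1.2 1 0) a b = R.zero := fun q => by
        rw [row0 hR M hM q.1.1 0]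
        exact bMul_zero_left hR _ a b
      rw [iSum_ext hz, iSum_zero hR, radd_zero hR]
    | succ k' =>
      have hpt : bMul R (iMatPow R M 0 (k' + 1) 0) (iMatPow R M (m + 1) 1 0) a b = R.zero := by
        rw [powZeroSucc M k']
        exact bMul_zero_left hR _ a b
      rw [hpt, hR.zero_add]
      -- expand the left factor of each summand by `powSucc`
      have hterm : ∀ q : {q : ℕ × ℕ // q.1 + q.2 = m},
          bMul R (iMatPow R M (q.1.1 + 1) (k' + 1) 0) (iMatPow R M q.1.2 1 0) a b
          = R.add (bMul R (bMul R (M 1 2) (iMatPow R M q.1.1 (k' + 2) 0))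
                (iMatPow R M q.1.2 1 0) a b)
              (R.add (bMul R (bMul R (M 1 1) (iMatPow R M q.1.1 (k' + 1) 0))
                  (iMatPow R M q.1.2 1 0) a b)
                (bMul R (bMul R (M 1 0) (iMatPow R M q.1.1 k' 0))
                  (iMatPow R M q.1.2 1 0) a b)) := fun q => by
        rw [powSucc hR M hM k' q.1.1, bAdd_bMul hR, bAdd_bMul hR]
      rw [iSum_ext hterm, iSum_add hR, iSum_add hR]
      have hS : ∀ (A' : Blk n S) (j : ℕ),
          R.iSum (fun q : {q : ℕ × ℕ // q.1 + q.2 = m} =>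
            bMul R (bMul R A' (iMatPow R M q.1.1 j 0)) (iMatPow R M q.1.2 1 0) a b)
          = bMul R A' (iMatPow R M m (j + 1) 0) a b := by
        intro A' j
        rw [iSum_ext (fun q => bMul_assoc hR A' _ _ a b)]
        rw [iSum_bMul hR]
        have hF : (fun l c => R.iSum fun q : {q : ℕ × ℕ // q.1 + q.2 = m} =>
            bMul R (iMatPow R M q.1.1 j 0) (iMatPow R M q.1.2 1 0) l c)
            = iMatPow R M m (j + 1) 0 := by
          funext l c
          exact (congrFun (congrFun (ih j) l) c).symm
        rw [hF]
      rw [hS, hS, hS]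
      have := powSucc hR M hM (k' + 1) m
      rw [congrFun (congrFun this a) b]
      rfl

theorem star_two (hR : R.IsComplete) (M : IMat n S) (hM : IsRoc R M) : iStar R M 2 0 = bMul R (iStar R M 1 0) (iStar R M 1 0) := by
  funext a b
  have h1 : iStar R M 2 0 a b = R.iSum (fun q : ℕ × ℕ =>
      bMul R (iMatPow R M q.1 1 0) (iMatPow R M q.2 1 0) a b) := by
    show R.iSum (fun m => iMatPow R M m 2 0 a b) = _
    rw [iSum_ext (fun m => congrFun (congrFun (Qlem hR M hM m 1) a) b)]
    exact hR.iSum_partition (fun q : ℕ × ℕ => q.1 + q.2)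
      (fun q : ℕ × ℕ => bMul R (iMatPow R M q.1 1 0) (iMatPow R M q.2 1 0) a b)
  have h2 : bMul R (iStar R M 1 0) (iStar R M 1 0) a b
      = R.iSum (fun q : ℕ × ℕ =>
        bMul R (iMatPow R M q.1 1 0) (iMatPow R M q.2 1 0) a b) := by
    show R.iSum (fun l : Fin n => R.mul (R.iSum fun r => iMatPow R M r 1 0 a l)
        (R.iSum fun s => iMatPow R M s 1 0 l b)) = _
    rw [iSum_ext (fun l => hR.iSum_mul _ _)]
    rw [iSum_ext (fun l => iSum_ext (fun r => hR.mul_iSum _ _))]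
    rw [iSum_swap hR]
    rw [iSum_ext (fun r => iSum_swap hR (fun l s =>
      R.mul (iMatPow R M r 1 0 a l) (iMatPow R M s 1 0 l b)))]
    rw [← iSum_prod hR (fun q : ℕ × ℕ => R.iSum (fun l : Fin n =>
      R.mul (iMatPow R M q.1 1 0 a l) (iMatPow R M q.2 1 0 l b)))]
    rfl
  rw [h1, h2]

theorem part_one (hR : R.IsComplete) (M : IMat n S) (hM : IsRoc R M) : IsQuadSol R (M 1 2) (M 1 1) (M 1 0) (iStar R M 1 0) := by
  show iStar R M 1 0 = quadRhs R (M 1 2) (M 1 1) (M 1 0) (iStar R M 1 0)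
  funext a b
  show R.iSum (fun m => iMatPow R M m 1 0 a b) = _
  rw [iSum_nat hR]
  have h0 : iMatPow R M 0 1 0 a b = R.zero := by
    rw [powZeroSucc M 0]; rfl
  rw [h0, hR.zero_add]
  have hstep : ∀ m, iMatPow R M (m + 1) 1 0 a b
      = R.add (bMul R (M 1 2) (iMatPow R M m 2 0) a b)
          (R.add (bMul R (M 1 1) (iMatPow R M m 1 0) a b)
            (bMul R (M 1 0) (iMatPow R M m 0 0) a b)) := fun m => by
    rw [congrFun (congrFun (powSucc hR M hM 0 m) a) b]
    rfl
  rw [iSum_ext hstep]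
  rw [iSum_add hR, iSum_add hR]
  have hA : R.iSum (fun m => bMul R (M 1 2) (iMatPow R M m 2 0) a b)
      = bMul R (M 1 2) (bMul R (iStar R M 1 0) (iStar R M 1 0)) a b := by
    rw [iSum_bMul hR]
    have : (fun l c => R.iSum fun m => iMatPow R M m 2 0 l c) = iStar R M 2 0 := rfl
    rw [this, star_two hR M hM]
  have hC : R.iSum (fun m => bMul R (M 1 1) (iMatPow R M m 1 0) a b)
      = bMul R (M 1 1) (iStar R M 1 0) a b := by
    rw [iSum_bMul hR]
    rfl
  have hB : R.iSum (fun m => bMul R (M 1 0) (iMatPow R M m 0 0) a b)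
      = M 1 0 a b := by
    rw [iSum_bMul hR]
    have : (fun l c => R.iSum fun m => iMatPow R M m 0 0 l c) = bOne R := by
      funext l c
      rw [iSum_nat hR]
      have hz : ∀ m, iMatPow R M (m + 1) 0 0 l c = R.zero := fun m => by
        rw [row0 hR M hM m 0]; rfl
      rw [iSum_ext hz, iSum_zero hR, radd_zero hR]
      rw [congrFun (congrFun (powZeroZero M) l) c]
    rw [this]
    exact bMul_one_right hR _ a b
  rw [hA, hC, hB]
  show _ = R.add (R.add (bMul R (M 1 2) (bMul R (iStar R M 1 0) (iStar R M 1 0)) a b)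
      (bMul R (M 1 1) (iStar R M 1 0) a b)) (M 1 0 a b)
  rw [hR.add_assoc]

/-! ### Part 2: least solution -/

theorem pow_step (hR : R.IsComplete) (M : IMat n S) (X : Blk n S) (hX : IsQuadSol R (M 1 2) (M 1 1) (M 1 0) X) (k : ℕ) :
    bPow R X (k + 1) = bAdd R (bMul R (M 1 2) (bPow R X (k + 2)))
      (bAdd R (bMul R (M 1 1) (bPow R X (k + 1))) (bMul R (M 1 0) (bPow R X k))) := by
  have hX' : X = quadRhs R (M 1 2) (M 1 1) (M 1 0) X := hX
  have h1 : bPow R X (k + 1)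
      = bMul R (quadRhs R (M 1 2) (M 1 1) (M 1 0) X) (bPow R X k) := by
    show bMul R X (bPow R X k) = _
    rw [← hX']
  funext a b
  rw [congrFun (congrFun h1 a) b]
  show bMul R (bAdd R (bAdd R (bMul R (M 1 2) (bMul R X X)) (bMul R (M 1 1) X)) (M 1 0))
      (bPow R X k) a b = _
  rw [bAdd_bMul hR, bAdd_bMul hR]
  rw [bMul_assoc hR (M 1 2) (bMul R X X) (bPow R X k) a b,
    bMul_assoc' hR X X (bPow R X k)]
  rw [bMul_assoc hR (M 1 1) X (bPow R X k) a b]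
  show R.add (R.add (bMul R (M 1 2) (bPow R X (k + 2)) a b)
      (bMul R (M 1 1) (bPow R X (k + 1)) a b)) (bMul R (M 1 0) (bPow R X k) a b) = _
  rw [hR.add_assoc]
  rfl

theorem pSum_bMul (hR : R.IsComplete) (A' : Blk n S) (Z : ℕ → Blk n S) (N : ℕ) (a b : Fin n) :
    pSum R (fun m => bMul R A' (Z m) a b) N
      = bMul R A' (fun l c => pSum R (fun m => Z m l c) N) a b := by
  show pSum R (fun m => R.iSum fun l => R.mul (A' a l) (Z m l b)) N
      = R.iSum (fun l => R.mul (A' a l) (pSum R (fun m => Z m l b) N))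
  rw [pSum_iSum hR]
  exact iSum_ext (fun l => pSum_mul_left hR _ _ N)

theorem pow_bound (hR : R.IsComplete) (M : IMat n S) (hM : IsRoc R M) (X : Blk n S) (hX : IsQuadSol R (M 1 2) (M 1 1) (M 1 0) X) :
    ∀ N k (a b : Fin n),
      sle R (pSum R (fun m => iMatPow R M m k 0 a b) N) (bPow R X k a b) := by
  intro N
  induction N with
  | zero => intro k a b; exact zero_sle hR _
  | succ N ihN =>
    intro k a b
    rw [pSum_shift hR]
    cases k with
    | zero =>
      have h1 : iMatPow R M 0 0 0 a b = bOne R a b := congrFun (congrFun (powZeroZero M) a) b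
      have h2 : (fun m => iMatPow R M (m + 1) 0 0 a b) = fun _ => R.zero := by
        funext m
        rw [row0 hR M hM m 0]
        rfl
      rw [h1, h2, pSum_zero hR, radd_zero hR]
      exact sle_refl hR _
    | succ k' =>
      have h1 : iMatPow R M 0 (k' + 1) 0 a b = R.zero := by
        rw [powZeroSucc M k']; rfl
      rw [h1, hR.zero_add]
      have h2 : (fun m => iMatPow R M (m + 1) (k' + 1) 0 a b)
          = fun m => R.add (bMul R (M 1 2) (iMatPow R M m (k' + 2) 0) a b)
              (R.add (bMul R (M 1 1) (iMatPow R M m (k' + 1) 0) a b)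
                (bMul R (M 1 0) (iMatPow R M m k' 0) a b)) := by
        funext m
        rw [congrFun (congrFun (powSucc hR M hM k' m) a) b]
        rfl
      rw [h2, pSum_add hR, pSum_add hR]
      have hle : ∀ (A' : Blk n S) (j : ℕ),
          sle R (pSum R (fun m => bMul R A' (iMatPow R M m j 0) a b) N)
            (bMul R A' (bPow R X j) a b) := by
        intro A' j
        rw [pSum_bMul hR]
        exact iSum_sle hR (fun l => mul_sle_left hR (A' a l) (ihN j l b))
      have htot := add_sle_add hR (hle (M 1 2) (k' + 2))
        (add_sle_add hR (hle (M 1 1) (k' + 1)) (hle (M 1 0) k'))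
      refine sle_trans hR htot (sle_of_eq hR ?_)
      rw [congrFun (congrFun (pow_step hR M X hX k') a) b]
      rfl

end Roc

end Stmt8Aux
/-- Let `S` be a complete starsemiring and `M` a roc matrix
over `S^{n×n}` with counter symbol `p`. Then `(M*)_{p,ε}` is a solution of the
algebraic system `x = M_{p,p²} x x + M_{p,p} x + M_{p,ε}` over `S^{n×n}`.
If `S` is moreover a continuous starsemiring, then `(M*)_{p,ε}` is the least
solution of this system (with respect to the natural order
`a ≤ b ↔ ∃ c, a + c = b`, taken entrywise). -/
theorem stmt_8 {S : Type} (R : CSOps S) (hR : R.IsComplete) {n : ℕ} (hn : 1 ≤ n)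
    (M : IMat n S) (hM : IsRoc R M) :
    IsQuadSol R (M 1 2) (M 1 1) (M 1 0) (iStar R M 1 0) ∧
      (R.IsContinuous → ∀ X : Blk n S, IsQuadSol R (M 1 2) (M 1 1) (M 1 0) X →
        ∀ a b : Fin n, ∃ c, R.add (iStar R M 1 0 a b) c = X a b) := by
  refine ⟨Stmt8Aux.part_one hR M hM, ?_⟩
  intro hC X hX a b
  refine hC.iSumLeast (fun m => iMatPow R M m 1 0 a b) (X a b) ?_
  intro l hl
  have hbd := Stmt8Aux.listSum_le_pSum hC.complete (fun m => iMatPow R M m 1 0 a b)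
    ((l.foldr max 0) + 1) l hl
    (fun x hx => by have := Stmt8Aux.le_foldr_max l x hx; omega)
  have hpb := Stmt8Aux.pow_bound hC.complete M hM X hX ((l.foldr max 0) + 1) 1 a b
  have hone : bPow R X 1 a b = X a b := Stmt8Aux.bMul_one_right hC.complete X a b
  exact Stmt8Aux.sle_trans hC.complete hbd (hone ▸ hpb)
end
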